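/- arXiv:2007.09031 — 9 statements merged into one kernel-verified Lean document; each statement's English description precedes it below -/
import Mathlib

section
/- Scaling estimate for rescaled functions in disjoint cells (computational core of the L^p estimate for the oscillating test functions, Lemma 3.4 of the paper): Let 1 ≤ p < ∞, α ≥ 1, M > 0 and ε ∈ (0,1]. Let g ∈ L^p(ℝ³) and let x_1, …, x_N ∈ ℝ³ be points such that the balls B(x_i, ε) are pairwise disjoint and N ≤ M ε^{−3}. Define h : ℝ³ → ℝ by h(x) = ε^{−α} g((x − x_i)/ε^α) if x ∈ B(x_i, ε) for some i, and h(x) = 0 otherwise. Then ‖h‖_{L^p(ℝ³)} ≤ M^{1/p} ε^{−α + 3(α−1)/p} ‖g‖_{L^p(ℝ³)}. -/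
/-!
On each cell `B(x_i, ε)` the function `|h|^p` is `ε^{-αp} |g|^p` composed with the affine map
`y ↦ ε^{-α} (y - x_i)`, whose Jacobian makes `∫_{B(x_i,ε)} |h|^p ≤ ε^{-αp} ε^{3α} ∫ |g|^p`.
Since `h` vanishes off the `N ≤ M ε^{-3}` cells, summing gives
`∫ |h|^p ≤ M ε^{-3 - αp + 3α} ∫ |g|^p`, and the `p`-th root is the claim.
-/

open MeasureTheory Metric Set

noncomputable section

abbrev E3 : Type := EuclideanSpace ℝ (Fin 3)

open scoped ENNReal
open Module

section Rescaling

variable {E : Type*} [NormedAddCommGroup E] [NormedSpace ℝ E] [MeasurableSpace E] [BorelSpace E]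
  [FiniteDimensional ℝ E] (μ : Measure E) [μ.IsAddHaarMeasure]

theorem lintegral_comp_smul_sub (G : E → ℝ≥0∞) {c : ℝ} (hc : c ≠ 0) (a : E) :
    ∫⁻ y, G (c • (y - a)) ∂μ = ENNReal.ofReal |(c ^ finrank ℝ E)⁻¹| * ∫⁻ z, G z ∂μ := by
  have hsmul : MeasurableEmbedding (c • · : E → E) :=
    (Homeomorph.smul (isUnit_iff_ne_zero.2 hc).unit).toMeasurableEquiv.measurableEmbedding
  rw [lintegral_sub_right_eq_self (fun z => G (c • z)) a, ← hsmul.lintegral_map,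
    Measure.map_addHaar_smul μ hc, lintegral_smul_measure, smul_eq_mul]

theorem setLIntegral_enorm_rpow_le_of_eqOn_rescaled {F : Type*} [NormedAddCommGroup F]
    [NormedSpace ℝ F] {p : ℝ} (hp : 0 ≤ p) {s : Set E} (hs : MeasurableSet s) {h g : E → F}
    {k c : ℝ} (hc : c ≠ 0) {a : E} (hh : ∀ y ∈ s, h y = k • g (c • (y - a))) :
    ∫⁻ y in s, ‖h y‖ₑ ^ p ∂μ
      ≤ ‖k‖ₑ ^ p * ENNReal.ofReal |(c ^ finrank ℝ E)⁻¹| * ∫⁻ z, ‖g z‖ₑ ^ p ∂μ := by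
  calc ∫⁻ y in s, ‖h y‖ₑ ^ p ∂μ = ∫⁻ y in s, ‖k‖ₑ ^ p * ‖g (c • (y - a))‖ₑ ^ p ∂μ :=
        setLIntegral_congr_fun hs fun y hy => by
          rw [hh y hy, enorm_smul, ENNReal.mul_rpow_of_nonneg _ _ hp]
    _ ≤ ∫⁻ y, ‖k‖ₑ ^ p * ‖g (c • (y - a))‖ₑ ^ p ∂μ := setLIntegral_le_lintegral _ _
    _ = _ := by
      rw [lintegral_const_mul' _ _ (ENNReal.rpow_ne_top_of_nonneg hp enorm_ne_top),
        lintegral_comp_smul_sub μ (fun z => ‖g z‖ₑ ^ p) hc, mul_assoc]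

end Rescaling

theorem lintegral_le_card_mul_of_support_subset_iUnion {α ι : Type*} [MeasurableSpace α]
    {μ : Measure α} [Fintype ι] {s : ι → Set α} {f : α → ℝ≥0∞} (hf : f.support ⊆ ⋃ i, s i)
    {K : ℝ≥0∞} (hK : ∀ i, ∫⁻ x in s i, f x ∂μ ≤ K) :
    ∫⁻ x, f x ∂μ ≤ Fintype.card ι * K := by
  calc ∫⁻ x, f x ∂μ = ∫⁻ x in ⋃ i, s i, f x ∂μ := (setLIntegral_eq_of_support_subset hf).symm
    _ ≤ ∑' i, ∫⁻ x in s i, f x ∂μ := lintegral_iUnion_le _ _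
    _ ≤ ∑ _i, K := by rw [tsum_fintype]; exact Finset.sum_le_sum fun i _ => hK i
    _ = Fintype.card ι * K := by simp

theorem eLpNorm_le_ofReal_mul_of_lintegral_rpow_le {α E F : Type*} [MeasurableSpace α]
    {μ : Measure α} [NormedAddCommGroup E] [NormedAddCommGroup F] {f : α → E} {g : α → F}
    {p C : ℝ} (hp : 0 < p) (hC : 0 ≤ C)
    (hfg : ∫⁻ x, ‖f x‖ₑ ^ p ∂μ ≤ ENNReal.ofReal (C ^ p) * ∫⁻ x, ‖g x‖ₑ ^ p ∂μ) :
    eLpNorm f (ENNReal.ofReal p) μ ≤ ENNReal.ofReal C * eLpNorm g (ENNReal.ofReal p) μ := by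
  have hp0 : ENNReal.ofReal p ≠ 0 := by simpa using hp
  rw [eLpNorm_eq_lintegral_rpow_enorm_toReal hp0 ENNReal.ofReal_ne_top,
    eLpNorm_eq_lintegral_rpow_enorm_toReal hp0 ENNReal.ofReal_ne_top,
    ENNReal.toReal_ofReal hp.le]
  calc (∫⁻ x, ‖f x‖ₑ ^ p ∂μ) ^ (1 / p)
      ≤ (ENNReal.ofReal (C ^ p) * ∫⁻ x, ‖g x‖ₑ ^ p ∂μ) ^ (1 / p) :=
        ENNReal.rpow_le_rpow hfg (by positivity)
    _ = _ := by
      rw [ENNReal.mul_rpow_of_nonneg _ _ (by positivity), ENNReal.ofReal_rpow_of_nonneg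
        (by positivity) (by positivity), ← Real.rpow_mul hC, mul_one_div_cancel hp.ne', Real.rpow_one]

theorem scaling_constant_rpow_eq {M ε p α d : ℝ} (hM : 0 ≤ M) (hε : 0 < ε) (hp : p ≠ 0) :
    (M ^ (1 / p) * ε ^ (-α + d * (α - 1) / p)) ^ p
      = M * ε ^ (-d) * (ε ^ (-α * p) * ε ^ (d * α)) := by
  rw [Real.mul_rpow (by positivity) (by positivity), ← Real.rpow_mul hM,
    ← Real.rpow_mul hε.le, one_div_mul_cancel hp, Real.rpow_one, mul_assoc,
    ← Real.rpow_add hε, ← Real.rpow_add hε]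
  congr 2
  field_simp
  ring

theorem scaling_estimate_disjoint_cells_general
    (p α M ε : ℝ) (hp : 1 ≤ p) (hM : 0 < M)
    (hε : ε ∈ Ioc (0:ℝ) 1)
    (g : E3 → ℝ)
    (N : ℕ) (x : Fin N → E3)
    (hN : (N : ℝ) ≤ M * ε ^ (-3 : ℝ))
    (h : E3 → ℝ)
    (hin : ∀ i, ∀ y ∈ ball (x i) ε, h y = ε ^ (-α) * g ((ε ^ α)⁻¹ • (y - x i)))
    (hout : ∀ y, (∀ i, y ∉ ball (x i) ε) → h y = 0) :
    eLpNorm h (ENNReal.ofReal p) volume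
      ≤ ENNReal.ofReal (M ^ (1/p) * ε ^ (-α + 3 * (α - 1) / p))
          * eLpNorm g (ENNReal.ofReal p) volume := by
  have hp0 : 0 < p := by linarith
  have hε0 : 0 < ε := hε.1
  have hsupp : (fun y => ‖h y‖ₑ ^ p).support ⊆ ⋃ i, ball (x i) ε := by
    intro y hy
    by_contra hy'
    exact hy (by simp [hout y (by simpa using hy'), hp0])
  have hcell : ∀ i, ∫⁻ y in ball (x i) ε, ‖h y‖ₑ ^ p
      ≤ ENNReal.ofReal (ε ^ (-α * p) * ε ^ (3 * α)) * ∫⁻ z, ‖g z‖ₑ ^ p := by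
    intro i
    refine (setLIntegral_enorm_rpow_le_of_eqOn_rescaled volume hp0.le measurableSet_ball
      (by positivity) (hin i)).trans_eq ?_
    rw [finrank_euclideanSpace_fin, Real.enorm_eq_ofReal (by positivity),
      ENNReal.ofReal_rpow_of_nonneg (by positivity) hp0.le, ← ENNReal.ofReal_mul (by positivity),
      inv_pow, inv_inv, abs_of_pos (by positivity), ← Real.rpow_mul hε0.le,
      ← Real.rpow_natCast, ← Real.rpow_mul hε0.le]
    norm_num [mul_comm]
  refine eLpNorm_le_ofReal_mul_of_lintegral_rpow_le hp0 (by positivity) ?_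
  calc ∫⁻ y, ‖h y‖ₑ ^ p
      ≤ N * (ENNReal.ofReal (ε ^ (-α * p) * ε ^ (3 * α)) * ∫⁻ z, ‖g z‖ₑ ^ p) := by
        simpa using lintegral_le_card_mul_of_support_subset_iUnion hsupp hcell
    _ ≤ ENNReal.ofReal (M * ε ^ (-3 : ℝ) * (ε ^ (-α * p) * ε ^ (3 * α))) * ∫⁻ z, ‖g z‖ₑ ^ p := by
        rw [← mul_assoc, ← ENNReal.ofReal_natCast, ← ENNReal.ofReal_mul (by positivity)]
        gcongr
    _ = _ := by rw [scaling_constant_rpow_eq hM.le hε0 hp0.ne']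

/-- Scaling estimate for rescaled functions in disjoint cells:
if `h(x) = ε^{−α} g((x − x_i)/ε^α)` on `B(x_i, ε)` (pairwise disjoint balls,
`N ≤ M ε^{−3}` of them) and `h = 0` elsewhere, then
`‖h‖_{L^p} ≤ M^{1/p} ε^{−α + 3(α−1)/p} ‖g‖_{L^p}`. -/
theorem scaling_estimate_disjoint_cells
    (p α M ε : ℝ) (hp : 1 ≤ p) (hα : 1 ≤ α) (hM : 0 < M)
    (hε : ε ∈ Ioc (0:ℝ) 1)
    (g : E3 → ℝ) (hg : MemLp g (ENNReal.ofReal p) volume)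
    (N : ℕ) (x : Fin N → E3)
    (hdisj : Pairwise fun i j => Disjoint (ball (x i) ε) (ball (x j) ε))
    (hN : (N : ℝ) ≤ M * ε ^ (-3 : ℝ))
    (h : E3 → ℝ)
    (hin : ∀ i, ∀ y ∈ ball (x i) ε, h y = ε ^ (-α) * g ((ε ^ α)⁻¹ • (y - x i)))
    (hout : ∀ y, (∀ i, y ∉ ball (x i) ε) → h y = 0) :
    eLpNorm h (ENNReal.ofReal p) volume
      ≤ ENNReal.ofReal (M ^ (1/p) * ε ^ (-α + 3 * (α - 1) / p))
          * eLpNorm g (ENNReal.ofReal p) volume :=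
  scaling_estimate_disjoint_cells_general p α M ε hp hM hε g N x hN h hin hout
end
end

section
/- Annulus estimate for rescaled decaying functions (computational core of the annulus estimate in Lemma 3.4 of the paper): Let α ≥ 1, K > 0, M > 0 and ε ∈ (0,1]. Let F : ℝ³ ∖ {0} → ℝ be measurable with |F(y)| ≤ K |y|^{−2} for all y ≠ 0, and let x_1, …, x_N ∈ ℝ³ be points such that the balls B(x_i, ε) are pairwise disjoint and N ≤ M ε^{−3}. Define h : ℝ³ → ℝ by h(x) = ε^{−α} F((x − x_i)/ε^α) if x ∈ B(x_i, ε/2) ∖ B(x_i, ε/4) for some i, and h(x) = 0 otherwise. Then ‖h‖_{L²(ℝ³)} ≤ √(8π) K M^{1/2} ε^{α − 2}. -/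
open MeasureTheory Metric Set

noncomputable section

open scoped ENNReal Real

/-!
On the annulus around `x i` the decay of `F` gives `|h y| ≤ K ε^α ‖y - x i‖⁻²`, so `|h|²` is
dominated by the sum over `i` of the translates by `x i` of `K² ε^{2α} ‖z‖⁻⁴` cut off to the
annulus `ε/4 ≤ ‖z‖ < ε/2`. In polar coordinates each translate has integral
`4π K² ε^{2α} (4/ε - 2/ε) = 8π K² ε^{2α-1}`, and there are `N ≤ M ε⁻³` of them.
-/

lemma abs_inv_mul_apply_inv_smul_le {E : Type*} [NormedAddCommGroup E] [NormedSpace ℝ E]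
    {F : E → ℝ} {K : ℝ}
    (hF : ∀ y, y ≠ 0 → |F y| ≤ K * ‖y‖ ^ (-2 : ℝ)) {s : ℝ} (hs : 0 < s) {z : E} (hz : z ≠ 0) :
    |s⁻¹ * F (s⁻¹ • z)| ≤ K * s * ‖z‖ ^ (-2 : ℝ) := by
  have hscale : ‖s⁻¹ • z‖ ^ (-2 : ℝ) = s ^ 2 * ‖z‖ ^ (-2 : ℝ) := by
    rw [norm_smul, Real.norm_of_nonneg (inv_nonneg.2 hs.le),
      Real.mul_rpow (inv_nonneg.2 hs.le) (norm_nonneg z), Real.inv_rpow hs.le,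
      Real.rpow_neg hs.le, inv_inv, Real.rpow_two]
  calc |s⁻¹ * F (s⁻¹ • z)| = s⁻¹ * |F (s⁻¹ • z)| := by rw [abs_mul, abs_of_pos (inv_pos.2 hs)]
    _ ≤ s⁻¹ * (K * (s ^ 2 * ‖z‖ ^ (-2 : ℝ))) := by
      rw [← hscale]
      exact mul_le_mul_of_nonneg_left (hF _ (smul_ne_zero (inv_ne_zero hs.ne') hz)) (by positivity)
    _ = K * s * ‖z‖ ^ (-2 : ℝ) := by field_simp

lemma lintegral_le_card_mul_of_le_sum_translates {G ι : Type*} [MeasurableSpace G] [AddGroup G]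
    [MeasurableAdd G] {μ : Measure G} [μ.IsAddRightInvariant] (s : Finset ι) (x : ι → G)
    {f g : G → ℝ≥0∞} (hg : Measurable g) (hfg : ∀ y, f y ≤ ∑ i ∈ s, g (y - x i)) :
    ∫⁻ y, f y ∂μ ≤ s.card * ∫⁻ z, g z ∂μ :=
  calc ∫⁻ y, f y ∂μ ≤ ∫⁻ y, ∑ i ∈ s, g (y - x i) ∂μ := lintegral_mono hfg
    _ = ∑ i ∈ s, ∫⁻ y, g (y - x i) ∂μ :=
      lintegral_finsetSum s fun i _ => by
        simpa only [sub_eq_add_neg, Function.comp_def] using hg.comp (measurable_add_const (-x i))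
    _ = s.card * ∫⁻ z, g z ∂μ := by
      simp only [lintegral_sub_right_eq_self, Finset.sum_const, nsmul_eq_mul]

lemma eLpNorm_two_le_of_lintegral_le {α F : Type*} [MeasurableSpace α] [NormedAddCommGroup F]
    {μ : Measure α} {f : α → F} {R : ℝ} (hR : 0 ≤ R)
    (hf : ∫⁻ y, ‖f y‖ₑ ^ (2 : ℝ) ∂μ ≤ ENNReal.ofReal (R ^ 2)) :
    eLpNorm f 2 μ ≤ ENNReal.ofReal R := by
  have h := eLpNorm_nnreal_pow_eq_lintegral (f := f) (μ := μ) (p := 2) two_ne_zero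
  rw [← ENNReal.rpow_le_rpow_iff (z := 2) two_pos]
  push_cast at h
  rw [h, ENNReal.ofReal_rpow_of_nonneg hR zero_le_two]
  simpa using hf

section Annulus

variable {E : Type*} [NormedAddCommGroup E]

lemma ball_diff_ball_eq_preimage_norm (a b : ℝ) :
    ball (0 : E) b \ ball 0 a = (‖·‖) ⁻¹' Ico a b := by
  ext y; simp [and_comm]

lemma enorm_rpow_two_le_sum_indicator {ι : Type*} [Fintype ι] {x : ι → E} {a b C : ℝ}
    {h : E → ℝ}
    (hbound : ∀ i, ∀ y ∈ ball (x i) b \ ball (x i) a, |h y| ≤ C * ‖y - x i‖ ^ (-2 : ℝ))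
    (hout : ∀ y, (∀ i, y ∉ ball (x i) b \ ball (x i) a) → h y = 0) (y : E) :
    ‖h y‖ₑ ^ (2 : ℝ) ≤ ∑ i, (ball 0 b \ ball 0 a).indicator
      (fun z => ENNReal.ofReal (C ^ 2 * ‖z‖ ^ (-4 : ℝ))) (y - x i) := by
  by_cases hy : ∃ i, y ∈ ball (x i) b \ ball (x i) a
  · obtain ⟨i, hi⟩ := hy
    have hmem : y - x i ∈ ball 0 b \ ball 0 a := by simpa [dist_eq_norm] using hi
    have hsq : (C * ‖y - x i‖ ^ (-2 : ℝ)) ^ 2 = C ^ 2 * ‖y - x i‖ ^ (-4 : ℝ) := by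
      rw [mul_pow, ← Real.rpow_natCast (‖y - x i‖ ^ (-2 : ℝ)), ← Real.rpow_mul (norm_nonneg _)]
      norm_num
    refine le_trans ?_ (Finset.single_le_sum (fun j _ => zero_le) (Finset.mem_univ i))
    rw [indicator_of_mem hmem, ← hsq, Real.enorm_eq_ofReal_abs,
      ENNReal.ofReal_rpow_of_nonneg (abs_nonneg _) zero_le_two]
    exact ENNReal.ofReal_le_ofReal
      (by simpa using pow_le_pow_left₀ (abs_nonneg _) (hbound i y hi) 2)
  · simp only [not_exists] at hy
    simp [hout y hy]

variable [MeasurableSpace E] [OpensMeasurableSpace E] [ProperSpace E] {μ : Measure E}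
  [IsFiniteMeasureOnCompacts μ]

lemma integrableOn_ball_diff_ball_norm_rpow_neg {a b p : ℝ} (ha : 0 < a) (hp : 0 ≤ p) :
    IntegrableOn (fun y : E => ‖y‖ ^ (-p)) (ball 0 b \ ball 0 a) μ := by
  have hbdd : ∀ y ∈ ball (0 : E) b \ ball 0 a, ‖‖y‖ ^ (-p)‖ ≤ a ^ (-p) := by
    rintro y ⟨-, hy⟩
    rw [mem_ball_zero_iff, not_lt] at hy
    rw [Real.norm_of_nonneg (by positivity)]
    exact Real.rpow_le_rpow_of_nonpos ha hy (neg_nonpos.2 hp)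
  exact Measure.integrableOn_of_bounded
    ((measure_mono sdiff_subset).trans_lt measure_ball_lt_top).ne
    (continuous_norm.measurable.pow_const _).aestronglyMeasurable
    ((ae_restrict_iff' (measurableSet_ball.diff measurableSet_ball)).2 (.of_forall hbdd))

end Annulus

lemma integral_Ico_rpow_neg_two {a b : ℝ} (ha : 0 < a) (hab : a ≤ b) :
    ∫ r in Ico a b, r ^ (-2 : ℝ) = a⁻¹ - b⁻¹ := by
  rw [integral_Ico_eq_integral_Ioo, ← integral_Ioc_eq_integral_Ioo,
    ← intervalIntegral.integral_of_le hab, integral_rpow (Or.inr ⟨by norm_num, ?_⟩)]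
  · norm_num [Real.rpow_neg_one]; ring
  · rw [uIcc_of_le hab]; exact fun h => ha.not_ge h.1

lemma setIntegral_ball_diff_ball_norm_rpow_neg_four {a b : ℝ} (ha : 0 < a) (hab : a ≤ b) :
    ∫ y in ball (0 : E3) b \ ball 0 a, ‖y‖ ^ (-4 : ℝ) = 4 * π * (a⁻¹ - b⁻¹) := by
  have hradial : ∀ r ∈ Ioi (0 : ℝ), r ^ 2 • (Ico a b).indicator (· ^ (-4 : ℝ)) r
      = (Ico a b).indicator (· ^ (-2 : ℝ)) r := by
    intro r (hr : 0 < r)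
    by_cases hmem : r ∈ Ico a b
    · simp only [indicator_of_mem hmem, smul_eq_mul, ← Real.rpow_natCast]
      rw [← Real.rpow_add hr]; norm_num
    · simp [indicator_of_notMem hmem]
  rw [ball_diff_ball_eq_preimage_norm,
    ← integral_indicator (measurableSet_Ico.preimage continuous_norm.measurable),
    show ((‖·‖) ⁻¹' Ico a b).indicator (fun y : E3 => ‖y‖ ^ (-4 : ℝ))
      = fun y => (Ico a b).indicator (· ^ (-4 : ℝ)) ‖y‖ from
      funext fun _ => indicator_comp_right (g := fun r : ℝ => r ^ (-4 : ℝ)) _,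
    integral_fun_norm_addHaar volume (fun r => (Ico a b).indicator (· ^ (-4 : ℝ)) r),
    finrank_euclideanSpace_fin, setIntegral_congr_fun measurableSet_Ioi hradial,
    setIntegral_indicator measurableSet_Ico,
    inter_eq_right.2 (show Ico a b ⊆ Ioi 0 from fun r hr => ha.trans_le hr.1),
    integral_Ico_rpow_neg_two ha hab, measureReal_def, EuclideanSpace.volume_ball_fin_three,
    ENNReal.toReal_mul, ENNReal.toReal_pow, ENNReal.toReal_ofReal zero_le_one,
    ENNReal.toReal_ofReal (by positivity), nsmul_eq_mul, smul_eq_mul]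
  ring

lemma lintegral_indicator_ball_diff_ball_mul_norm_rpow_neg_four {a b C : ℝ} (ha : 0 < a)
    (hab : a ≤ b) (hC : 0 ≤ C) :
    ∫⁻ y, (ball (0 : E3) b \ ball 0 a).indicator (fun y => ENNReal.ofReal (C * ‖y‖ ^ (-4 : ℝ))) y
      = ENNReal.ofReal (C * (4 * π * (a⁻¹ - b⁻¹))) := by
  rw [lintegral_indicator (measurableSet_ball.diff measurableSet_ball),
    ← setIntegral_ball_diff_ball_norm_rpow_neg_four ha hab, ← integral_const_mul,
    ofReal_integral_eq_lintegral_ofReal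
      ((integrableOn_ball_diff_ball_norm_rpow_neg ha (by norm_num)).const_mul C)
      (.of_forall fun y => by positivity)]

theorem annulus_estimate_decaying_general
    (α K M ε : ℝ) (hK : 0 < K) (hM : 0 < M)
    (hε : ε ∈ Ioc (0:ℝ) 1)
    (F : E3 → ℝ)
    (hF : ∀ y : E3, y ≠ 0 → |F y| ≤ K * ‖y‖ ^ (-2 : ℝ))
    (N : ℕ) (x : Fin N → E3)
    (hN : (N : ℝ) ≤ M * ε ^ (-3 : ℝ))
    (h : E3 → ℝ)
    (hin : ∀ i, ∀ y ∈ ball (x i) (ε/2) \ ball (x i) (ε/4),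
      h y = ε ^ (-α) * F ((ε ^ α)⁻¹ • (y - x i)))
    (hout : ∀ y, (∀ i, y ∉ ball (x i) (ε/2) \ ball (x i) (ε/4)) → h y = 0) :
    eLpNorm h 2 volume
      ≤ ENNReal.ofReal (Real.sqrt (8 * Real.pi) * K * M ^ ((1:ℝ)/2) * ε ^ (α - 2)) := by
  obtain ⟨hε0, -⟩ := hε
  have hbound : ∀ i, ∀ y ∈ ball (x i) (ε / 2) \ ball (x i) (ε / 4),
      |h y| ≤ K * ε ^ α * ‖y - x i‖ ^ (-2 : ℝ) := fun i y hy => by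
    rw [hin i y hy, Real.rpow_neg hε0.le]
    exact abs_inv_mul_apply_inv_smul_le hF (by positivity)
      (sub_ne_zero.2 fun hyx => hy.2 (hyx ▸ mem_ball_self (by positivity)))
  have hconst : M * ε ^ (-3 : ℝ) * ((K * ε ^ α) ^ 2 * (4 * π * ((ε / 4)⁻¹ - (ε / 2)⁻¹)))
      = (√(8 * π) * K * M ^ ((1 : ℝ) / 2) * ε ^ (α - 2)) ^ 2 := by
    rw [mul_pow, mul_pow, mul_pow, mul_pow, Real.sq_sqrt (by positivity), ← Real.sqrt_eq_rpow,
      Real.sq_sqrt hM.le, Real.rpow_sub hε0, Real.rpow_neg hε0.le, Real.rpow_two]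
    norm_cast
    field_simp
    ring
  refine eLpNorm_two_le_of_lintegral_le (by positivity) ?_
  calc ∫⁻ y, ‖h y‖ₑ ^ (2 : ℝ)
      ≤ (Finset.univ : Finset (Fin N)).card * ENNReal.ofReal
          ((K * ε ^ α) ^ 2 * (4 * π * ((ε / 4)⁻¹ - (ε / 2)⁻¹))) := by
        rw [← lintegral_indicator_ball_diff_ball_mul_norm_rpow_neg_four (by positivity)
          (by linarith) (by positivity)]
        exact lintegral_le_card_mul_of_le_sum_translates _ x (by measurability)
          (enorm_rpow_two_le_sum_indicator hbound hout)
    _ ≤ ENNReal.ofReal (M * ε ^ (-3 : ℝ)) *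
          ENNReal.ofReal ((K * ε ^ α) ^ 2 * (4 * π * ((ε / 4)⁻¹ - (ε / 2)⁻¹))) := by
        rw [Finset.card_univ, Fintype.card_fin]
        gcongr
        simpa only [ENNReal.ofReal_natCast] using ENNReal.ofReal_le_ofReal hN
    _ = _ := by rw [← ENNReal.ofReal_mul (by positivity), hconst]

/-- Annulus estimate for rescaled decaying functions: if `|F(y)| ≤ K |y|^{−2}`,
the balls `B(x_i, ε)` are pairwise disjoint with `N ≤ M ε^{−3}`, and
`h(x) = ε^{−α} F((x − x_i)/ε^α)` on the annuli `B(x_i, ε/2) ∖ B(x_i, ε/4)` and `0`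
elsewhere, then `‖h‖_{L²} ≤ √(8π) K M^{1/2} ε^{α−2}`. -/
theorem annulus_estimate_decaying
    (α K M ε : ℝ) (hα : 1 ≤ α) (hK : 0 < K) (hM : 0 < M)
    (hε : ε ∈ Ioc (0:ℝ) 1)
    (F : E3 → ℝ) (hFmeas : Measurable F)
    (hF : ∀ y : E3, y ≠ 0 → |F y| ≤ K * ‖y‖ ^ (-2 : ℝ))
    (N : ℕ) (x : Fin N → E3)
    (hdisj : Pairwise fun i j => Disjoint (ball (x i) ε) (ball (x j) ε))
    (hN : (N : ℝ) ≤ M * ε ^ (-3 : ℝ))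
    (h : E3 → ℝ)
    (hin : ∀ i, ∀ y ∈ ball (x i) (ε/2) \ ball (x i) (ε/4),
      h y = ε ^ (-α) * F ((ε ^ α)⁻¹ • (y - x i)))
    (hout : ∀ y, (∀ i, y ∉ ball (x i) (ε/2) \ ball (x i) (ε/4)) → h y = 0) :
    eLpNorm h 2 volume
      ≤ ENNReal.ofReal (Real.sqrt (8 * Real.pi) * K * M ^ ((1:ℝ)/2) * ε ^ (α - 2)) :=
  annulus_estimate_decaying_general α K M ε hK hM hε F hF N x hN h hin hout
end
end

section
/- Equivalence of oscillations around the mean and around the power of the mean (estimate (eq:gamma1) of the paper): Let a > 1/2. There exist constants 0 < c ≤ C, depending only on a, such that for every measure space (X, μ) with 0 < μ(X) < ∞ and every measurable f : X → [0,∞) with f ∈ L¹(μ) and f^a ∈ L²(μ), writing ⟨h⟩ = μ(X)^{−1} ∫_X h dμ for the average, one has c ∫_X |f^a − ⟨f^a⟩|² dμ ≤ ∫_X |f^a − ⟨f⟩^a|² dμ ≤ C ∫_X |f^a − ⟨f^a⟩|² dμ. -/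
/-!
Put `g = f ^ a`, `p = a⁻¹ ∈ (0, 2)` and normalize `μ` to a probability measure. Then the two
oscillations are `Var g` and `Var g + (⟨g⟩ - ⟨g ^ p⟩ ^ (1 / p)) ^ 2`, so it suffices to bound the
gap between the mean and the power mean `⟨g ^ p⟩ ^ (1 / p)` by a multiple of `√(Var g)`.
From above, since `p ≤ 2` the power mean is at most `⟨g ^ 2⟩ ^ (1 / 2) ≤ ⟨g⟩ + √(Var g)`.
From below, averaging `u ^ p ≥ 1 + p (u - 1) - 4 (u - 1) ^ 2` at `u = g / ⟨g⟩` gives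
`⟨g ^ p⟩ ≥ ⟨g⟩ ^ p (1 - 4 Var g / ⟨g⟩ ^ 2)`, which suffices when `⟨g⟩ > 4 √(Var g)`;
otherwise the mean itself is at most `4 √(Var g)`.
-/

open MeasureTheory ProbabilityTheory Real Set

lemma one_add_mul_sub_sub_sq_le_rpow {b u : ℝ} (hb₀ : 0 ≤ b) (hb₂ : b ≤ 2) (hu : 0 ≤ u) :
    1 + b * (u - 1) - 4 * (u - 1) ^ 2 ≤ u ^ b := by
  rcases lt_or_ge u (1 / 2) with hu₁ | hu₁
  · nlinarith [rpow_nonneg hu b, mul_nonneg hb₀ (by linarith : 0 ≤ 1 - u)]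
  have hu₀ : 0 < u := by linarith
  -- `u ^ b = exp (b log u) ≥ 1 + b log u` and `log u ≥ 1 - u⁻¹ = (u - 1) - (u - 1)² / u`.
  have hlog : 1 + b * (1 - u⁻¹) ≤ u ^ b := by
    rw [rpow_def_of_pos hu₀]
    nlinarith [add_one_le_exp (log u * b), one_sub_inv_le_log_of_pos hu₀]
  have hquad : b * (u - 1) - 4 * (u - 1) ^ 2 ≤ b * (1 - u⁻¹) := by
    have : 1 - u⁻¹ = (u - 1) - (u - 1) ^ 2 / u := by field_simp; ring
    rw [this, div_eq_mul_inv]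
    have : u⁻¹ ≤ 2 := by rw [inv_le_comm₀ hu₀ two_pos]; linarith
    nlinarith [mul_nonneg hb₀ (sq_nonneg (u - 1)), sq_nonneg (u - 1)]
  linarith

lemma one_sub_max_mul_le_rpow_one_sub {r δ : ℝ} (hr : 0 ≤ r) (hδ₀ : 0 ≤ δ) (hδ₁ : δ ≤ 1) :
    1 - max r 1 * δ ≤ (1 - δ) ^ r := by
  rcases le_total 1 r with h | h
  · rw [max_eq_left h, sub_eq_add_neg, ← mul_neg, sub_eq_add_neg]
    exact one_add_mul_self_le_rpow_one_add (by linarith) h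
  · rw [max_eq_right h, one_mul]
    have := rpow_le_rpow_of_exponent_ge' (by linarith : 0 ≤ 1 - δ) (by linarith) hr h
    rwa [rpow_one] at this

noncomputable def powerMean {X : Type*} [MeasurableSpace X] (ν : Measure X) (p : ℝ)
    (g : X → ℝ) : ℝ :=
  (∫ x, g x ^ p ∂ν) ^ p⁻¹

lemma powerMean_two {X : Type*} [MeasurableSpace X] (ν : Measure X) (g : X → ℝ) :
    powerMean ν 2 g = √(∫ x, g x ^ 2 ∂ν) := by
  simp only [powerMean, rpow_two, sqrt_eq_rpow, one_div]

section ProbabilityMeasure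

variable {X : Type*} [MeasurableSpace X] {ν : Measure X} [IsProbabilityMeasure ν] {g : X → ℝ}
  {p : ℝ}

lemma integral_sub_sq_eq_variance_add (hg : MemLp g 2 ν) (t : ℝ) :
    ∫ x, (g x - t) ^ 2 ∂ν = Var[g; ν] + (ν[g] - t) ^ 2 := by
  have h : Var[fun x => g x - t; ν] = ν[(fun x => g x - t) ^ 2] - ν[fun x => g x - t] ^ 2 :=
    variance_eq_sub (hg.sub (memLp_const t))
  rw [variance_sub_const hg.aestronglyMeasurable] at h
  rw [h, integral_sub (hg.integrable one_le_two) (integrable_const t)]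
  simp

lemma variance_le_integral_sub_sq (hg : MemLp g 2 ν) (t : ℝ) :
    Var[g; ν] ≤ ∫ x, (g x - t) ^ 2 ∂ν := by
  rw [integral_sub_sq_eq_variance_add hg]
  exact le_add_of_nonneg_right (sq_nonneg _)

lemma powerMean_le_powerMean {q : ℝ} (hp : 0 < p) (hpq : p ≤ q) (hg₀ : ∀ x, 0 ≤ g x)
    (hgp : Integrable (fun x => g x ^ p) ν) (hgq : Integrable (fun x => g x ^ q) ν) :
    powerMean ν p g ≤ powerMean ν q g := by
  have hq : 0 < q := hp.trans_le hpq
  have hcomp : ∀ x, (g x ^ q) ^ (p / q) = g x ^ p := fun x => by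
    rw [← rpow_mul (hg₀ x), mul_div_cancel₀ _ hq.ne']
  have hjensen : ∫ x, g x ^ p ∂ν ≤ (∫ x, g x ^ q ∂ν) ^ (p / q) := by
    have := (concaveOn_rpow (div_nonneg hp.le hq.le) (div_le_one_of_le₀ hpq hq.le)).le_map_integral
      (continuous_rpow_const (div_nonneg hp.le hq.le)).continuousOn isClosed_Ici
      (ae_of_all _ fun x => rpow_nonneg (hg₀ x) q) hgq
      (by simpa only [Function.comp_def, hcomp] using hgp)
    simpa only [hcomp] using this
  have hq₀ : 0 ≤ ∫ x, g x ^ q ∂ν := integral_nonneg fun x => rpow_nonneg (hg₀ x) q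
  calc powerMean ν p g ≤ ((∫ x, g x ^ q ∂ν) ^ (p / q)) ^ p⁻¹ :=
        rpow_le_rpow (integral_nonneg fun x => rpow_nonneg (hg₀ x) p) hjensen (inv_nonneg.2 hp.le)
    _ = powerMean ν q g := by
      rw [powerMean, ← rpow_mul hq₀]
      congr 1
      field_simp

lemma powerMean_le_integral_add_sqrt_variance (hp : 0 < p) (hp₂ : p ≤ 2) (hg₀ : ∀ x, 0 ≤ g x)
    (hg : MemLp g 2 ν) (hgp : Integrable (fun x => g x ^ p) ν) :
    powerMean ν p g ≤ ν[g] + √Var[g; ν] := by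
  have hm : 0 ≤ ν[g] := integral_nonneg hg₀
  calc powerMean ν p g ≤ powerMean ν 2 g :=
        powerMean_le_powerMean hp hp₂ hg₀ hgp (by simpa only [rpow_two] using hg.integrable_sq)
    _ = √(Var[g; ν] + ν[g] ^ 2) := by
      rw [powerMean_two, variance_eq_sub hg]
      simp
    _ ≤ √(Var[g; ν] + 2 * ν[g] * √Var[g; ν] + ν[g] ^ 2) := by
      gcongr
      exact le_add_of_nonneg_right (by positivity)
    _ = ν[g] + √Var[g; ν] := by
      rw [← sqrt_sq (by positivity : 0 ≤ ν[g] + √Var[g; ν])]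
      congr 1
      rw [add_sq, sq_sqrt (variance_nonneg g ν)]
      ring

lemma integral_rpow_mul_one_sub_le_integral_rpow (hp₀ : 0 ≤ p) (hp₂ : p ≤ 2)
    (hg₀ : ∀ x, 0 ≤ g x) (hg : MemLp g 2 ν) (hgp : Integrable (fun x => g x ^ p) ν)
    (hm : 0 < ν[g]) :
    ν[g] ^ p * (1 - 4 * Var[g; ν] / ν[g] ^ 2) ≤ ∫ x, g x ^ p ∂ν := by
  set m := ν[g] with hm_def
  have hmp : 0 < m ^ p := rpow_pos_of_pos hm p
  have hpt : ∀ x, m ^ p * (1 - p + p / m * g x) - 4 * m ^ p / m ^ 2 * (g x - m) ^ 2 ≤ g x ^ p := by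
    intro x
    have h := mul_le_mul_of_nonneg_left
      (one_add_mul_sub_sub_sq_le_rpow hp₀ hp₂ (div_nonneg (hg₀ x) hm.le)) hmp.le
    rw [div_rpow (hg₀ x) hm.le, mul_div_cancel₀ _ hmp.ne'] at h
    refine (le_of_eq ?_).trans h
    field_simp
    ring
  have hint₁ : Integrable (fun x => m ^ p * (1 - p + p / m * g x)) ν :=
    ((integrable_const _).add ((hg.integrable one_le_two).const_mul _)).const_mul _
  have hint₂ : Integrable (fun x => 4 * m ^ p / m ^ 2 * (g x - m) ^ 2) ν :=
    (hg.sub (memLp_const m)).integrable_sq.const_mul _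
  calc m ^ p * (1 - 4 * Var[g; ν] / m ^ 2)
      = ∫ x, (m ^ p * (1 - p + p / m * g x) - 4 * m ^ p / m ^ 2 * (g x - m) ^ 2) ∂ν := by
        rw [integral_sub hint₁ hint₂, integral_const_mul, integral_const_mul,
          integral_add (integrable_const _) ((hg.integrable one_le_two).const_mul _),
          integral_const_mul, variance_eq_integral hg.aemeasurable, ← hm_def]
        simp only [integral_const, probReal_univ, one_smul]
        field_simp
        ring
    _ ≤ ∫ x, g x ^ p ∂ν := integral_mono (hint₁.sub hint₂) hgp hpt

lemma integral_sub_powerMean_le (hp : 0 < p) (hp₂ : p ≤ 2) (hg₀ : ∀ x, 0 ≤ g x)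
    (hg : MemLp g 2 ν) (hgp : Integrable (fun x => g x ^ p) ν) :
    ν[g] - powerMean ν p g ≤ max p⁻¹ 4 * √Var[g; ν] := by
  set m := ν[g]
  set V := Var[g; ν]
  have hM₀ : 0 ≤ powerMean ν p g :=
    rpow_nonneg (integral_nonneg fun x => rpow_nonneg (hg₀ x) p) _
  have hσ : 0 ≤ √V := sqrt_nonneg V
  rcases le_or_gt m (4 * √V) with hsmall | hlarge
  · calc m - powerMean ν p g ≤ 4 * √V := by linarith
      _ ≤ max p⁻¹ 4 * √V := by gcongr; exact le_max_right _ _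
  have hm : 0 < m := hσ.trans_lt (by linarith)
  set δ := 4 * V / m ^ 2 with hδ
  have hδ₀ : 0 ≤ δ := div_nonneg (mul_nonneg zero_le_four (variance_nonneg g ν)) (sq_nonneg m)
  have hVσ : V = √V * √V := (mul_self_sqrt (variance_nonneg g ν)).symm
  have hmδ : m * δ ≤ √V := by
    rw [hδ, mul_div_assoc', div_le_iff₀ (by positivity)]
    nlinarith [mul_le_mul_of_nonneg_left hlarge.le (mul_nonneg hσ hm.le)]
  have hδ₁ : δ ≤ 1 := by
    rw [hδ, div_le_one (by positivity)]
    nlinarith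
  have hlow : m * (1 - max p⁻¹ 1 * δ) ≤ powerMean ν p g :=
    calc m * (1 - max p⁻¹ 1 * δ) ≤ m * (1 - δ) ^ p⁻¹ := by
          gcongr
          exact one_sub_max_mul_le_rpow_one_sub (inv_nonneg.2 hp.le) hδ₀ hδ₁
      _ = (m ^ p * (1 - δ)) ^ p⁻¹ := by
          rw [mul_rpow (by positivity) (by linarith), rpow_rpow_inv hm.le hp.ne']
      _ ≤ powerMean ν p g :=
          rpow_le_rpow (mul_nonneg (rpow_nonneg hm.le p) (by linarith))
            (integral_rpow_mul_one_sub_le_integral_rpow hp.le hp₂ hg₀ hg hgp hm)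
            (inv_nonneg.2 hp.le)
  calc m - powerMean ν p g ≤ max p⁻¹ 1 * (m * δ) := by linarith
    _ ≤ max p⁻¹ 1 * √V := by gcongr
    _ ≤ max p⁻¹ 4 * √V := by gcongr; norm_num

lemma integral_sub_powerMean_sq_le (hp : 0 < p) (hp₂ : p ≤ 2) (hg₀ : ∀ x, 0 ≤ g x)
    (hg : MemLp g 2 ν) (hgp : Integrable (fun x => g x ^ p) ν) :
    ∫ x, (g x - powerMean ν p g) ^ 2 ∂ν ≤ (1 + max p⁻¹ 4 ^ 2) * Var[g; ν] := by
  have hup := powerMean_le_integral_add_sqrt_variance hp hp₂ hg₀ hg hgp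
  have hdown := integral_sub_powerMean_le hp hp₂ hg₀ hg hgp
  have hL : 1 ≤ max p⁻¹ 4 := le_max_of_le_right (by norm_num)
  have hgap : (ν[g] - powerMean ν p g) ^ 2 ≤ (max p⁻¹ 4 * √Var[g; ν]) ^ 2 :=
    sq_le_sq' (by nlinarith [sqrt_nonneg Var[g; ν]]) hdown
  rw [mul_pow, sq_sqrt (variance_nonneg g ν)] at hgap
  rw [integral_sub_sq_eq_variance_add hg]
  linarith

end ProbabilityMeasure

/-- Equivalence of oscillations around the mean and around the power of the mean:
for `a > 1/2` there are constants `0 < c ≤ C` depending only on `a` such that for every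
finite measure space and every nonnegative `f ∈ L¹` with `f^a ∈ L²`,
`c ∫ |f^a − ⟨f^a⟩|² ≤ ∫ |f^a − ⟨f⟩^a|² ≤ C ∫ |f^a − ⟨f^a⟩|²`. -/
theorem oscillation_power_mean_equiv (a : ℝ) (ha : 1/2 < a) :
    ∃ c C : ℝ, 0 < c ∧ c ≤ C ∧
      ∀ (X : Type*) [MeasurableSpace X] (μ : Measure X),
        0 < μ univ → μ univ < ⊤ →
        ∀ f : X → ℝ, Measurable f → (∀ x, 0 ≤ f x) →
          Integrable f μ → MemLp (fun x => f x ^ a) 2 μ →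
          (c * ∫ x, (f x ^ a - (μ univ).toReal⁻¹ * ∫ y, f y ^ a ∂μ) ^ 2 ∂μ)
              ≤ (∫ x, (f x ^ a - ((μ univ).toReal⁻¹ * ∫ y, f y ∂μ) ^ a) ^ 2 ∂μ) ∧
          (∫ x, (f x ^ a - ((μ univ).toReal⁻¹ * ∫ y, f y ∂μ) ^ a) ^ 2 ∂μ)
              ≤ C * ∫ x, (f x ^ a - (μ univ).toReal⁻¹ * ∫ y, f y ^ a ∂μ) ^ 2 ∂μ := by
  have ha₀ : 0 < a := by linarith
  refine ⟨1, 1 + max a 4 ^ 2, one_pos, le_add_of_nonneg_right (sq_nonneg _), ?_⟩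
  intro X _ μ hμ₀ hμ_top f _ hf₀ hf hfa
  have : IsFiniteMeasure μ := ⟨hμ_top⟩
  have : NeZero μ := ⟨fun h => by simp [h] at hμ₀⟩
  set ν := (μ univ)⁻¹ • μ
  have hν_ne_top : (μ univ)⁻¹ ≠ ⊤ := ENNReal.inv_ne_top.2 hμ₀.ne'
  have havg (h : X → ℝ) : (μ univ).toReal⁻¹ * ∫ x, h x ∂μ = ∫ x, h x ∂ν := (average_eq μ h).symm
  have hint (h : X → ℝ) : ∫ x, h x ∂μ = (μ univ).toReal * ∫ x, h x ∂ν :=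
    (measure_smul_average μ h).symm
  have hfg : (fun x => (f x ^ a) ^ a⁻¹) = f := funext fun x => rpow_rpow_inv (hf₀ x) ha₀.ne'
  have hmean : ((μ univ).toReal⁻¹ * ∫ y, f y ∂μ) ^ a = powerMean ν a⁻¹ (fun x => f x ^ a) := by
    rw [powerMean, hfg, inv_inv, havg]
  have hg : MemLp (fun x => f x ^ a) 2 ν := hfa.smul_measure hν_ne_top
  have hgp : Integrable (fun x => (f x ^ a) ^ a⁻¹) ν := by
    rw [hfg]; exact hf.smul_measure hν_ne_top
  have hτ : 0 ≤ (μ univ).toReal := ENNReal.toReal_nonneg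
  rw [hmean, havg, hint, hint, ← variance_eq_integral hg.aemeasurable, one_mul]
  refine ⟨mul_le_mul_of_nonneg_left (variance_le_integral_sub_sq hg _) hτ, ?_⟩
  have hupper := integral_sub_powerMean_sq_le (inv_pos.2 ha₀)
    (inv_le_of_inv_le₀ (by norm_num) (by linarith)) (fun x => rpow_nonneg (hf₀ x) a) hg hgp
  rw [inv_inv] at hupper
  calc _ ≤ (μ univ).toReal * ((1 + max a 4 ^ 2) * Var[fun x => f x ^ a; ν]) := by gcongr
    _ = _ := by ring
end

section
/- Pointwise power equivalence: Let γ > 1. There exist constants 0 < c ≤ C, depending only on γ, such that for all real a, b ≥ 0: c (a^{γ/2} − b^{γ/2})² ≤ (a^{γ−1} − b^{γ−1})(a − b) ≤ C (a^{γ/2} − b^{γ/2})². -/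
/-!
Writing `b = t a` with `t ∈ [0, 1]`, each difference `a ^ r - b ^ r` (`r ≥ 0`) equals
`a ^ r (1 - t ^ r)`, and Bernoulli's inequality pins `1 - t ^ r` between `min 1 r` and `max 1 r`
times `1 - t`. Hence both `(a ^ (γ - 1) - b ^ (γ - 1)) (a - b)` and `(a ^ (γ / 2) - b ^ (γ / 2)) ^ 2`
are comparable to `a ^ (γ - 2) (a - b) ^ 2`, with constants depending only on `γ`.
-/

open Real

lemma one_sub_rpow_bounds_of_le_one {r t : ℝ} (hr₀ : 0 ≤ r) (hr₁ : r ≤ 1) (ht₀ : 0 ≤ t)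
    (ht₁ : t ≤ 1) : r * (1 - t) ≤ 1 - t ^ r ∧ 1 - t ^ r ≤ 1 - t := by
  have bernoulli := rpow_one_add_le_one_add_mul_self (s := t - 1) (by linarith) hr₀ hr₁
  rw [add_sub_cancel] at bernoulli
  exact ⟨by linarith, by linarith [self_le_rpow_of_le_one ht₀ ht₁ hr₁]⟩

lemma one_sub_rpow_bounds_of_one_le {r t : ℝ} (hr : 1 ≤ r) (ht₀ : 0 ≤ t) (ht₁ : t ≤ 1) :
    1 - t ≤ 1 - t ^ r ∧ 1 - t ^ r ≤ r * (1 - t) := by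
  have bernoulli := one_add_mul_self_le_rpow_one_add (s := t - 1) (by linarith) hr
  rw [add_sub_cancel] at bernoulli
  exact ⟨by linarith [rpow_le_self_of_le_one ht₀ ht₁ hr], by linarith⟩

lemma one_sub_rpow_bounds {r t : ℝ} (hr : 0 ≤ r) (ht₀ : 0 ≤ t) (ht₁ : t ≤ 1) :
    min 1 r * (1 - t) ≤ 1 - t ^ r ∧ 1 - t ^ r ≤ max 1 r * (1 - t) := by
  rcases le_total r 1 with hr₁ | hr₁
  · simpa only [min_eq_right hr₁, max_eq_left hr₁, one_mul] using
      one_sub_rpow_bounds_of_le_one hr hr₁ ht₀ ht₁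
  · simpa only [min_eq_left hr₁, max_eq_right hr₁, one_mul] using
      one_sub_rpow_bounds_of_one_le hr₁ ht₀ ht₁

lemma rpow_sub_rpow_bounds {r a b : ℝ} (hr : 0 ≤ r) (hb : 0 ≤ b) (hba : b ≤ a) :
    min 1 r * a ^ (r - 1) * (a - b) ≤ a ^ r - b ^ r ∧
      a ^ r - b ^ r ≤ max 1 r * a ^ (r - 1) * (a - b) := by
  rcases (hb.trans hba).eq_or_lt with rfl | ha
  · obtain rfl : b = 0 := le_antisymm hba hb
    simp
  set t := b / a
  have ht₀ : 0 ≤ t := div_nonneg hb ha.le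
  have ht₁ : t ≤ 1 := (div_le_one ha).mpr hba
  have hb_eq : b = a * t := (mul_div_cancel₀ b ha.ne').symm
  have hscale : a ^ r = a ^ (r - 1) * a := by
    rw [rpow_sub_one ha.ne', div_mul_cancel₀ _ ha.ne']
  have hw : 0 ≤ a ^ (r - 1) * a := by positivity
  have hpow : a ^ r - b ^ r = a ^ (r - 1) * a * (1 - t ^ r) := by
    rw [hb_eq, mul_rpow ha.le ht₀, hscale]; ring
  have hlin : a ^ (r - 1) * (a - b) = a ^ (r - 1) * a * (1 - t) := by rw [hb_eq]; ring
  obtain ⟨lower, upper⟩ := one_sub_rpow_bounds hr ht₀ ht₁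
  rw [hpow, mul_assoc (min 1 r), mul_assoc (max 1 r), hlin]
  exact ⟨by linarith [mul_le_mul_of_nonneg_left lower hw],
    by linarith [mul_le_mul_of_nonneg_left upper hw]⟩

lemma rpow_sub_mul_sub_bounds_of_le {γ a b : ℝ} (hγ : 1 ≤ γ) (hb : 0 ≤ b) (hba : b ≤ a) :
    min 1 (γ - 1) / max 1 (γ / 2) ^ 2 * (a ^ (γ / 2) - b ^ (γ / 2)) ^ 2
        ≤ (a ^ (γ - 1) - b ^ (γ - 1)) * (a - b) ∧
      (a ^ (γ - 1) - b ^ (γ - 1)) * (a - b)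
        ≤ max 1 (γ - 1) / min 1 (γ / 2) ^ 2 * (a ^ (γ / 2) - b ^ (γ / 2)) ^ 2 := by
  have ha : 0 ≤ a := hb.trans hba
  have hab : 0 ≤ a - b := sub_nonneg.mpr hba
  set X := a ^ (γ - 2) * (a - b) ^ 2
  have hT : min 1 (γ - 1) * X ≤ (a ^ (γ - 1) - b ^ (γ - 1)) * (a - b) ∧
      (a ^ (γ - 1) - b ^ (γ - 1)) * (a - b) ≤ max 1 (γ - 1) * X := by
    obtain ⟨lower, upper⟩ := rpow_sub_rpow_bounds (r := γ - 1) (by linarith) hb hba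
    rw [show γ - 1 - 1 = γ - 2 by ring] at lower upper
    exact ⟨by linarith [mul_le_mul_of_nonneg_right lower hab],
      by linarith [mul_le_mul_of_nonneg_right upper hab]⟩
  have hS : min 1 (γ / 2) ^ 2 * X ≤ (a ^ (γ / 2) - b ^ (γ / 2)) ^ 2 ∧
      (a ^ (γ / 2) - b ^ (γ / 2)) ^ 2 ≤ max 1 (γ / 2) ^ 2 * X := by
    obtain ⟨lower, upper⟩ := rpow_sub_rpow_bounds (r := γ / 2) (by linarith) hb hba
    have hsq : (a ^ (γ / 2 - 1)) ^ 2 = a ^ (γ - 2) := by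
      rw [← rpow_mul_natCast ha]; ring_nf
    have hY : 0 ≤ min 1 (γ / 2) * a ^ (γ / 2 - 1) * (a - b) :=
      mul_nonneg (mul_nonneg (le_min zero_le_one (by linarith)) (by positivity)) hab
    have lower_sq := pow_le_pow_left₀ hY lower 2
    have upper_sq := pow_le_pow_left₀ (hY.trans lower) upper 2
    rw [mul_pow, mul_pow, hsq] at lower_sq upper_sq
    exact ⟨by linarith, by linarith⟩
  have hm₁ : 0 ≤ min 1 (γ - 1) := le_min zero_le_one (by linarith)
  have hM₁ : 0 ≤ max 1 (γ - 1) := zero_le_one.trans (le_max_left _ _)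
  constructor
  · rw [div_mul_eq_mul_div, div_le_iff₀ (by positivity)]
    linarith [mul_le_mul_of_nonneg_left hS.2 hm₁,
      mul_le_mul_of_nonneg_left hT.1 (sq_nonneg (max 1 (γ / 2)))]
  · rw [div_mul_eq_mul_div, le_div_iff₀ (by positivity)]
    linarith [mul_le_mul_of_nonneg_left hS.1 hM₁,
      mul_le_mul_of_nonneg_left hT.2 (sq_nonneg (min 1 (γ / 2)))]

/-- Pointwise power equivalence: for `γ > 1` there are constants `0 < c ≤ C` depending
only on `γ` such that for all `a, b ≥ 0`,
`c (a^{γ/2} − b^{γ/2})² ≤ (a^{γ−1} − b^{γ−1})(a − b) ≤ C (a^{γ/2} − b^{γ/2})²`. -/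
theorem pointwise_power_equiv (γ : ℝ) (hγ : 1 < γ) :
    ∃ c C : ℝ, 0 < c ∧ c ≤ C ∧
      ∀ a b : ℝ, 0 ≤ a → 0 ≤ b →
        c * (a ^ (γ/2) - b ^ (γ/2)) ^ 2
            ≤ (a ^ (γ - 1) - b ^ (γ - 1)) * (a - b) ∧
        (a ^ (γ - 1) - b ^ (γ - 1)) * (a - b)
            ≤ C * (a ^ (γ/2) - b ^ (γ/2)) ^ 2 := by
  have hm₁ : 0 < min 1 (γ - 1) := lt_min one_pos (by linarith)
  have hm₂ : 0 < min 1 (γ / 2) := lt_min one_pos (by linarith)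
  refine ⟨min 1 (γ - 1) / max 1 (γ / 2) ^ 2, max 1 (γ - 1) / min 1 (γ / 2) ^ 2,
    by positivity, ?_, ?_⟩
  · exact div_le_div₀ (hm₁.le.trans min_le_max) min_le_max (by positivity)
      (pow_le_pow_left₀ hm₂.le min_le_max 2)
  · intro a b ha hb
    rcases le_total b a with hba | hab
    · exact rpow_sub_mul_sub_bounds_of_le hγ.le hb hba
    · have swap : (a ^ (γ - 1) - b ^ (γ - 1)) * (a - b) = (b ^ (γ - 1) - a ^ (γ - 1)) * (b - a) :=
        by ring
      rw [swap, sub_sq_comm]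
      exact rpow_sub_mul_sub_bounds_of_le hγ.le ha hab
end

section
/- Pointwise power equivalence with weight (a+b)^{γ−2}: Let γ > 1. There exist constants 0 < c ≤ C, depending only on γ, such that for all real a, b ≥ 0 with a + b > 0: c (a^{γ/2} − b^{γ/2})² ≤ (a + b)^{γ−2} (a − b)² ≤ C (a^{γ/2} − b^{γ/2})². -/
noncomputable section

/-- For `0 ≤ t ≤ 1` and `s ≥ 1/2`, `1 - t ≤ 2 (1 - t^s)`. -/
lemma ppew_aux1 (t s : ℝ) (ht0 : 0 ≤ t) (ht1 : t ≤ 1) (hs : 1/2 ≤ s) :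
    1 - t ≤ 2 * (1 - t ^ s) := by
  rcases eq_or_lt_of_le ht0 with h | h
  · rw [← h, Real.zero_rpow (by positivity)]
    linarith
  · have h1 : t ^ s ≤ t ^ (1/2 : ℝ) := Real.rpow_le_rpow_of_exponent_ge h ht1 hs
    have h2 : t ^ (1/2 : ℝ) * t ^ (1/2 : ℝ) = t := by
      rw [← Real.rpow_add h]; norm_num
    have h3 : t ^ (1/2 : ℝ) ≤ 1 := Real.rpow_le_one ht0 ht1 (by norm_num)
    have h4 : 0 ≤ t ^ (1/2 : ℝ) := Real.rpow_nonneg ht0 _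
    nlinarith

/-- For `0 ≤ t ≤ 1`, `0 < s ≤ n`, `1 - t^s ≤ n (1 - t)`. -/
lemma ppew_aux2 (t s : ℝ) (n : ℕ) (ht0 : 0 ≤ t) (ht1 : t ≤ 1) (hs : 0 < s)
    (hn : s ≤ n) : 1 - t ^ s ≤ n * (1 - t) := by
  have hn1 : (1 : ℝ) ≤ n := by
    have := hs.trans_le hn
    exact_mod_cast Nat.one_le_iff_ne_zero.mpr (by exact_mod_cast this.ne')
  rcases eq_or_lt_of_le ht0 with h | h
  · rw [← h, Real.zero_rpow hs.ne']
    nlinarith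
  · have h1 : t ^ (n : ℝ) ≤ t ^ s := Real.rpow_le_rpow_of_exponent_ge h ht1 hn
    rw [Real.rpow_natCast] at h1
    have h2 : 1 + (n : ℝ) * (t - 1) ≤ (1 + (t - 1)) ^ n := one_add_mul_le_pow (by linarith) n
    have h3 : (1 + (t - 1)) = t := by ring
    rw [h3] at h2
    linarith

/-- Two-sided bound for `x^s - y^s` in terms of `x^(s-1) (x - y)`. -/
lemma ppew_aux3 (x y s : ℝ) (n : ℕ) (hy : 0 ≤ y) (hxy : y ≤ x) (hx : 0 < x)
    (hs : 1/2 ≤ s) (hn : s ≤ n) :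
    (1/2) * (x ^ (s-1) * (x - y)) ≤ x ^ s - y ^ s ∧
      x ^ s - y ^ s ≤ n * (x ^ (s-1) * (x - y)) := by
  set t := y / x with ht
  have ht0 : 0 ≤ t := div_nonneg hy hx.le
  have ht1 : t ≤ 1 := (div_le_one hx).mpr hxy
  have hyx : y = t * x := by rw [ht, div_mul_cancel₀ _ hx.ne']
  have hys : y ^ s = t ^ s * x ^ s := by
    rw [hyx, Real.mul_rpow ht0 hx.le]
  have hxx : x ^ (s-1) * x = x ^ s := by
    rw [← Real.rpow_add_one hx.ne']; ring_nf
  have hkey1 : 1 - t ≤ 2 * (1 - t ^ s) := ppew_aux1 t s ht0 ht1 hs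
  have hkey2 : 1 - t ^ s ≤ n * (1 - t) := ppew_aux2 t s n ht0 ht1 (by linarith) hn
  have hxs : 0 ≤ x ^ s := Real.rpow_nonneg hx.le _
  have e1 : x ^ s - y ^ s = x ^ s * (1 - t ^ s) := by rw [hys]; ring
  have e2 : x ^ (s-1) * (x - y) = x ^ s * (1 - t) := by
    rw [hyx]; rw [show x - t * x = x * (1 - t) by ring, ← mul_assoc, hxx]
  rw [e1, e2]
  constructor <;> nlinarith

/-- Comparison of `x^(s-1)` with `(x+y)^(s-1)` when `0 ≤ y ≤ x`. -/
lemma ppew_aux4 (x y s : ℝ) (hy : 0 ≤ y) (hxy : y ≤ x) (hx : 0 < x) :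
    min 1 ((2:ℝ) ^ (1-s)) * (x+y) ^ (s-1) ≤ x ^ (s-1) ∧
      x ^ (s-1) ≤ max 1 ((2:ℝ) ^ (1-s)) * (x+y) ^ (s-1) := by
  have hxy2 : (x + y) / 2 ≤ x := by linarith
  have hxy2' : 0 < (x + y) / 2 := by linarith
  have hW : 0 ≤ (x+y) ^ (s-1) := Real.rpow_nonneg (by linarith) _
  have hhalf : ((x+y)/2) ^ (s-1) = (x+y) ^ (s-1) * (2:ℝ) ^ (1-s) := by
    rw [Real.div_rpow (by linarith : (0:ℝ) ≤ x + y) (by norm_num), div_eq_mul_inv,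
      ← Real.rpow_neg (by norm_num : (0:ℝ) ≤ 2)]
    ring_nf
  rcases le_total s 1 with hs | hs
  · -- exponent s - 1 ≤ 0
    have h1 : x ^ (s-1) ≤ ((x+y)/2) ^ (s-1) :=
      Real.rpow_le_rpow_of_nonpos hxy2' hxy2 (by linarith)
    have h2 : (x+y) ^ (s-1) ≤ x ^ (s-1) :=
      Real.rpow_le_rpow_of_nonpos hx (by linarith) (by linarith)
    rw [hhalf] at h1
    constructor
    · calc min 1 ((2:ℝ) ^ (1-s)) * (x+y) ^ (s-1) ≤ 1 * (x+y) ^ (s-1) := by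
            exact mul_le_mul_of_nonneg_right (min_le_left _ _) hW
        _ = (x+y) ^ (s-1) := one_mul _
        _ ≤ x ^ (s-1) := h2
    · calc x ^ (s-1) ≤ (x+y) ^ (s-1) * (2:ℝ) ^ (1-s) := h1
        _ = (2:ℝ) ^ (1-s) * (x+y) ^ (s-1) := by ring
        _ ≤ max 1 ((2:ℝ) ^ (1-s)) * (x+y) ^ (s-1) :=
            mul_le_mul_of_nonneg_right (le_max_right _ _) hW
  · -- exponent s - 1 ≥ 0
    have h1 : ((x+y)/2) ^ (s-1) ≤ x ^ (s-1) :=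
      Real.rpow_le_rpow hxy2'.le hxy2 (by linarith)
    have h2 : x ^ (s-1) ≤ (x+y) ^ (s-1) :=
      Real.rpow_le_rpow hx.le (by linarith) (by linarith)
    rw [hhalf] at h1
    constructor
    · calc min 1 ((2:ℝ) ^ (1-s)) * (x+y) ^ (s-1) ≤ (2:ℝ) ^ (1-s) * (x+y) ^ (s-1) :=
            mul_le_mul_of_nonneg_right (min_le_right _ _) hW
        _ = (x+y) ^ (s-1) * (2:ℝ) ^ (1-s) := by ring
        _ ≤ x ^ (s-1) := h1
    · calc x ^ (s-1) ≤ (x+y) ^ (s-1) := h2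
        _ = 1 * (x+y) ^ (s-1) := (one_mul _).symm
        _ ≤ max 1 ((2:ℝ) ^ (1-s)) * (x+y) ^ (s-1) :=
            mul_le_mul_of_nonneg_right (le_max_left _ _) hW

/-- One-sided (ordered) version of the main theorem. -/
lemma ppew_key (γ : ℝ) (hγ : 1 < γ) (x y : ℝ) (hy : 0 ≤ y) (hxy : y ≤ x)
    (hsum : 0 < x + y) :
    (1 / ((⌈γ/2⌉₊ : ℝ) * max 1 ((2:ℝ) ^ (1-γ/2)))) ^ 2 * (x ^ (γ/2) - y ^ (γ/2)) ^ 2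
        ≤ (x + y) ^ (γ - 2) * (x - y) ^ 2 ∧
      (x + y) ^ (γ - 2) * (x - y) ^ 2
        ≤ (2 / min 1 ((2:ℝ) ^ (1-γ/2))) ^ 2 * (x ^ (γ/2) - y ^ (γ/2)) ^ 2 := by
  set s := γ / 2 with hsdef
  have hs : 1/2 ≤ s := by rw [hsdef]; linarith
  have hx : 0 < x := by
    by_contra h
    push_neg at h
    have : y ≤ 0 := hxy.trans h
    linarith
  set n := ⌈s⌉₊ with hndef
  have hn : s ≤ (n : ℝ) := Nat.le_ceil s
  have hn0 : (0:ℝ) < n := lt_of_lt_of_le (by linarith) hn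
  obtain ⟨h3l, h3u⟩ := ppew_aux3 x y s n hy hxy hx hs hn
  obtain ⟨h4l, h4u⟩ := ppew_aux4 x y s hy hxy hx
  set P := (2:ℝ) ^ (1-s) with hPdef
  have hP : 0 < P := Real.rpow_pos_of_pos (by norm_num) _
  set W := (x+y) ^ (s-1) with hWdef
  have hW : 0 ≤ W := Real.rpow_nonneg hsum.le _
  have hD : 0 ≤ x - y := by linarith
  have hWW : W * W = (x + y) ^ (γ - 2) := by
    have he : s - 1 + (s - 1) = γ - 2 := by rw [hsdef]; ring
    rw [hWdef, ← Real.rpow_add hsum, he]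
  set E := x ^ s - y ^ s with hEdef
  have hE0 : 0 ≤ E := by nlinarith [mul_nonneg (mul_nonneg (by positivity : (0:ℝ) ≤ x ^ (s-1)) hD) (by norm_num : (0:ℝ) ≤ (1:ℝ))]
  have hmin : 0 < min 1 P := lt_min one_pos hP
  have hmax : 0 < max 1 P := lt_of_lt_of_le one_pos (le_max_left _ _)
  -- upper bound on E
  have hEu : E ≤ (n : ℝ) * max 1 P * (W * (x - y)) := by
    calc E ≤ n * (x ^ (s-1) * (x - y)) := h3u
      _ ≤ n * (max 1 P * W * (x - y)) := by
          apply mul_le_mul_of_nonneg_left _ hn0.le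
          exact mul_le_mul_of_nonneg_right h4u hD
      _ = (n : ℝ) * max 1 P * (W * (x - y)) := by ring
  -- lower bound on E
  have hEl : min 1 P / 2 * (W * (x - y)) ≤ E := by
    calc min 1 P / 2 * (W * (x - y)) = (1/2) * ((min 1 P * W) * (x - y)) := by ring
      _ ≤ (1/2) * (x ^ (s-1) * (x - y)) := by
          apply mul_le_mul_of_nonneg_left _ (by norm_num)
          exact mul_le_mul_of_nonneg_right h4l hD
      _ ≤ E := h3l
  have hWD : 0 ≤ W * (x - y) := mul_nonneg hW hD
  constructor
  · -- c * E^2 ≤ W² * D²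
    have hsq : E ^ 2 ≤ ((n : ℝ) * max 1 P) ^ 2 * (W * (x - y)) ^ 2 := by
      nlinarith
    have hM : (0:ℝ) < (n : ℝ) * max 1 P := mul_pos hn0 hmax
    rw [← hWW]
    calc (1 / ((n : ℝ) * max 1 P)) ^ 2 * E ^ 2
        ≤ (1 / ((n : ℝ) * max 1 P)) ^ 2 * (((n : ℝ) * max 1 P) ^ 2 * (W * (x - y)) ^ 2) := by
          apply mul_le_mul_of_nonneg_left hsq (by positivity)
      _ = (W * (x - y)) ^ 2 := by field_simp
      _ = W * W * (x - y) ^ 2 := by ring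
  · have hsq : (min 1 P / 2) ^ 2 * (W * (x - y)) ^ 2 ≤ E ^ 2 := by
      nlinarith [mul_nonneg (by positivity : (0:ℝ) ≤ min 1 P / 2) hWD]
    rw [← hWW]
    have : W * W * (x - y) ^ 2 = (W * (x - y)) ^ 2 := by ring
    rw [this]
    calc (W * (x - y)) ^ 2
        = (2 / min 1 P) ^ 2 * ((min 1 P / 2) ^ 2 * (W * (x - y)) ^ 2) := by
          field_simp
      _ ≤ (2 / min 1 P) ^ 2 * E ^ 2 := by
          apply mul_le_mul_of_nonneg_left hsq (by positivity)

/-- Pointwise power equivalence with weight `(a+b)^{γ−2}`: for `γ > 1` there are constants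
`0 < c ≤ C` depending only on `γ` such that for all `a, b ≥ 0` with `a + b > 0`,
`c (a^{γ/2} − b^{γ/2})² ≤ (a + b)^{γ−2} (a − b)² ≤ C (a^{γ/2} − b^{γ/2})²`. -/
theorem pointwise_power_equiv_weighted (γ : ℝ) (hγ : 1 < γ) :
    ∃ c C : ℝ, 0 < c ∧ c ≤ C ∧
      ∀ a b : ℝ, 0 ≤ a → 0 ≤ b → 0 < a + b →
        c * (a ^ (γ/2) - b ^ (γ/2)) ^ 2
            ≤ (a + b) ^ (γ - 2) * (a - b) ^ 2 ∧
        (a + b) ^ (γ - 2) * (a - b) ^ 2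
            ≤ C * (a ^ (γ/2) - b ^ (γ/2)) ^ 2 := by
  set P := (2:ℝ) ^ (1-γ/2) with hPdef
  have hP : 0 < P := Real.rpow_pos_of_pos (by norm_num) _
  have hn0 : (0:ℝ) < (⌈γ/2⌉₊ : ℝ) := lt_of_lt_of_le (by linarith) (Nat.le_ceil _)
  have hmax : (1:ℝ) ≤ max 1 P := le_max_left _ _
  have hmin : 0 < min 1 P := lt_min one_pos hP
  have hminle : min 1 P ≤ 1 := min_le_left _ _
  refine ⟨(1 / ((⌈γ/2⌉₊ : ℝ) * max 1 P)) ^ 2, (2 / min 1 P) ^ 2, by positivity, ?_, ?_⟩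
  · have h1 : (1 / ((⌈γ/2⌉₊ : ℝ) * max 1 P)) ≤ 1 := by
      rw [div_le_one (by positivity)]
      calc (1:ℝ) ≤ (⌈γ/2⌉₊ : ℝ) := by
            have : γ/2 ≤ (⌈γ/2⌉₊ : ℝ) := Nat.le_ceil _
            have hc : (1:ℕ) ≤ ⌈γ/2⌉₊ := by
              by_contra h
              push_neg at h
              interval_cases h' : ⌈γ/2⌉₊ <;> simp_all <;> linarith
            exact_mod_cast hc
        _ ≤ (⌈γ/2⌉₊ : ℝ) * max 1 P := le_mul_of_one_le_right hn0.le hmax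
    have h2 : (2:ℝ) ≤ 2 / min 1 P := by
      rw [le_div_iff₀ hmin]; nlinarith
    have ha : (1 / ((⌈γ/2⌉₊ : ℝ) * max 1 P)) ^ 2 ≤ 1 := by
      have hr0 : (0:ℝ) ≤ 1 / ((⌈γ/2⌉₊ : ℝ) * max 1 P) := by positivity
      nlinarith
    have hb : (4:ℝ) ≤ (2 / min 1 P) ^ 2 := by nlinarith
    linarith
  · intro a b ha hb hab
    rcases le_total b a with h | h
    · exact ppew_key γ hγ a b hb h hab
    · have := ppew_key γ hγ b a ha h (by linarith)
      rw [show b + a = a + b by ring, show (b - a)^2 = (a - b)^2 by ring,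
        show (b ^ (γ/2) - a ^ (γ/2))^2 = (a ^ (γ/2) - b ^ (γ/2))^2 by ring] at this
      exact this
end
end

section
/- Averaged-power comparison along a segment: Let γ > 1. There exist constants 0 < c ≤ C, depending only on γ, such that for all real a, b ≥ 0 with a + b > 0: c (a + b)^{γ−2} ≤ ∫_0^1 (b + θ(a − b))^{γ−2} dθ ≤ C (a + b)^{γ−2}. (For 1 < γ < 2 the integrand may be unbounded at an endpoint when a = 0 or b = 0, but the integral is finite.) -/
/-!
Write `x_θ = (1 - θ) b + θ a`. Then `min θ (1 - θ) · (a + b) ≤ x_θ ≤ a + b`, so whatever the sign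
of `s = γ - 2`, the power `x_θ ^ s` lies between `(a + b) ^ s` and `w θ · (a + b) ^ s`, where
`w θ = (min θ (1 - θ)) ^ s`. Since `s > -1`, the weight `w` is integrable on `(0, 1)`, and one can
take `c = ∫ min (w θ) 1` and `C = ∫ max (w θ) 1`.
-/

open MeasureTheory Set

lemma Real.rpow_mem_uIcc_of_mem_Icc {L U x : ℝ} (hL : 0 < L) (hx : x ∈ Icc L U) (s : ℝ) :
    x ^ s ∈ uIcc (L ^ s) (U ^ s) := by
  have hx₀ : 0 < x := hL.trans_le hx.1
  rcases le_total 0 s with hs | hs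
  · rw [uIcc_of_le (Real.rpow_le_rpow hL.le (hx.1.trans hx.2) hs)]
    exact ⟨Real.rpow_le_rpow hL.le hx.1 hs, Real.rpow_le_rpow hx₀.le hx.2 hs⟩
  · rw [uIcc_of_ge (Real.rpow_le_rpow_of_nonpos hL (hx.1.trans hx.2) hs)]
    exact ⟨Real.rpow_le_rpow_of_nonpos hx₀ hx.2 hs, Real.rpow_le_rpow_of_nonpos hL hx.1 hs⟩

lemma add_mul_sub_mem_Icc {a b θ : ℝ} (ha : 0 ≤ a) (hb : 0 ≤ b) (hθ : θ ∈ Icc (0 : ℝ) 1) :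
    b + θ * (a - b) ∈ Icc (min θ (1 - θ) * (a + b)) (a + b) := by
  have h₁ : min θ (1 - θ) ≤ θ := min_le_left _ _
  have h₂ : min θ (1 - θ) ≤ 1 - θ := min_le_right _ _
  constructor <;> nlinarith [hθ.1, hθ.2]

lemma min_sub_pos_of_mem_Ioo {θ : ℝ} (hθ : θ ∈ Ioo (0 : ℝ) 1) : 0 < min θ (1 - θ) :=
  lt_min hθ.1 (sub_pos.2 hθ.2)

lemma integrableOn_min_sub_rpow {s : ℝ} (hs : -1 < s) :
    IntegrableOn (fun θ : ℝ => min θ (1 - θ) ^ s) (Ioo 0 1) := by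
  have h₀ : IntegrableOn (fun θ : ℝ => θ ^ s) (Ioc 0 1) :=
    (intervalIntegrable_iff_integrableOn_Ioc_of_le zero_le_one).1
      (intervalIntegral.intervalIntegrable_rpow' hs)
  have h₁ : IntegrableOn (fun θ : ℝ => (1 - θ) ^ s) (Ioc 0 1) := by
    have h := (intervalIntegral.intervalIntegrable_rpow' (a := 0) (b := 1) hs).comp_sub_left 1
    simp only [sub_zero, sub_self] at h
    exact (intervalIntegrable_iff_integrableOn_Ioc_of_le zero_le_one).1 h.symm
  refine ((h₀.add h₁).mono_set Ioo_subset_Ioc_self).mono'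
    (by fun_prop : Measurable fun θ : ℝ => min θ (1 - θ) ^ s).aestronglyMeasurable ?_
  filter_upwards [ae_restrict_mem measurableSet_Ioo] with θ hθ
  rw [Real.norm_of_nonneg (Real.rpow_nonneg (min_sub_pos_of_mem_Ioo hθ).le s), Pi.add_apply]
  rcases min_choice θ (1 - θ) with h | h <;> rw [h]
  · exact le_add_of_nonneg_right (Real.rpow_nonneg (sub_nonneg.2 hθ.2.le) s)
  · exact le_add_of_nonneg_left (Real.rpow_nonneg hθ.1.le s)

lemma rpow_add_mul_sub_mem_Icc {a b θ : ℝ} (ha : 0 ≤ a) (hb : 0 ≤ b) (hab : 0 < a + b)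
    (hθ : θ ∈ Ioo (0 : ℝ) 1) (s : ℝ) :
    (b + θ * (a - b)) ^ s ∈
      Icc (min (min θ (1 - θ) ^ s) 1 * (a + b) ^ s) (max (min θ (1 - θ) ^ s) 1 * (a + b) ^ s) := by
  have hK : 0 ≤ (a + b) ^ s := Real.rpow_nonneg hab.le s
  have h := Real.rpow_mem_uIcc_of_mem_Icc (mul_pos (min_sub_pos_of_mem_Ioo hθ) hab)
    (add_mul_sub_mem_Icc ha hb (Ioo_subset_Icc_self hθ)) s
  rw [Real.mul_rpow (min_sub_pos_of_mem_Ioo hθ).le hab.le, uIcc] at h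
  rwa [min_mul_of_nonneg _ _ hK, max_mul_of_nonneg _ _ hK, one_mul]

lemma setIntegral_Ioo_pos {f : ℝ → ℝ} {a b : ℝ} (hab : a < b) (hf : IntegrableOn f (Ioo a b))
    (hpos : ∀ x ∈ Ioo a b, 0 < f x) : 0 < ∫ x in Ioo a b, f x := by
  have h := intervalIntegral.intervalIntegral_pos_of_pos_on
    ((intervalIntegrable_iff_integrableOn_Ioo_of_le hab.le).2 hf) hpos hab
  rwa [intervalIntegral.integral_of_le hab.le, integral_Ioc_eq_integral_Ioo] at h

/-- Averaged-power comparison along a segment: for `γ > 1` there are constants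
`0 < c ≤ C` depending only on `γ` such that for all `a, b ≥ 0` with `a + b > 0`,
`c (a + b)^{γ−2} ≤ ∫_0^1 (b + θ(a − b))^{γ−2} dθ ≤ C (a + b)^{γ−2}`. -/
theorem segment_average_power_comparison (γ : ℝ) (hγ : 1 < γ) :
    ∃ c C : ℝ, 0 < c ∧ c ≤ C ∧
      ∀ a b : ℝ, 0 ≤ a → 0 ≤ b → 0 < a + b →
        c * (a + b) ^ (γ - 2)
            ≤ (∫ θ in Ioo (0:ℝ) 1, (b + θ * (a - b)) ^ (γ - 2)) ∧
        (∫ θ in Ioo (0:ℝ) 1, (b + θ * (a - b)) ^ (γ - 2))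
            ≤ C * (a + b) ^ (γ - 2) := by
  set w : ℝ → ℝ := fun θ => min θ (1 - θ) ^ (γ - 2)
  have hw : IntegrableOn w (Ioo 0 1) := integrableOn_min_sub_rpow (by linarith)
  have hone : IntegrableOn (fun _ : ℝ => (1 : ℝ)) (Ioo 0 1) :=
    integrableOn_const (by simp [Real.volume_Ioo])
  have hlo : IntegrableOn (fun θ => min (w θ) 1) (Ioo 0 1) := hw.inf hone
  have hhi : IntegrableOn (fun θ => max (w θ) 1) (Ioo 0 1) := hw.sup hone
  refine ⟨∫ θ in Ioo 0 1, min (w θ) 1, ∫ θ in Ioo 0 1, max (w θ) 1,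
    setIntegral_Ioo_pos zero_lt_one hlo fun θ hθ =>
      lt_min (Real.rpow_pos_of_pos (min_sub_pos_of_mem_Ioo hθ) _) one_pos,
    setIntegral_mono hlo hhi fun θ => min_le_max, fun a b ha hb hab => ?_⟩
  set K := (a + b) ^ (γ - 2)
  have hbounds := fun θ (hθ : θ ∈ Ioo (0 : ℝ) 1) => rpow_add_mul_sub_mem_Icc ha hb hab hθ (γ - 2)
  have hf : IntegrableOn (fun θ => (b + θ * (a - b)) ^ (γ - 2)) (Ioo 0 1) :=
    integrable_of_le_of_le (by fun_prop : Measurable _).aestronglyMeasurable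
      (ae_restrict_of_forall_mem measurableSet_Ioo fun θ hθ => (hbounds θ hθ).1)
      (ae_restrict_of_forall_mem measurableSet_Ioo fun θ hθ => (hbounds θ hθ).2)
      (hlo.mul_const K) (hhi.mul_const K)
  rw [← integral_mul_const, ← integral_mul_const]
  exact ⟨setIntegral_mono_on (hlo.mul_const K) hf measurableSet_Ioo fun θ hθ => (hbounds θ hθ).1,
    setIntegral_mono_on hf (hhi.mul_const K) measurableSet_Ioo fun θ hθ => (hbounds θ hθ).2⟩
end

section
/- Taylor-remainder equivalence for the pressure potential (estimate (eq:gamma2) of the paper): Let γ > 1. There exist constants 0 < c ≤ C, depending only on γ, such that for all real a, b ≥ 0 (with the convention 0^{γ−1} = 0): c (a^{γ/2} − b^{γ/2})² ≤ a^γ/γ − b^γ/γ − b^{γ−1}(a − b) ≤ C (a^{γ/2} − b^{γ/2})². -/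
noncomputable section

private lemma rp_mul_rp {x : ℝ} (hx : 0 ≤ x) {p q : ℝ} (h : p + q ≠ 0) :
    x ^ p * x ^ q = x ^ (p + q) := (Real.rpow_add' hx h).symm

-- AM-GM case 1: lower bound for θ ≤ 1/2
private lemma amgm1 {θ s t : ℝ} (hθ0 : 0 < θ) (hθ1 : θ < 1) (hθ : 2*θ ≤ 1)
    (hs : 0 ≤ s) (ht : 0 ≤ t) :
    s ^ (2*θ) * t ^ (2*(1-θ)) ≤ (1-2*θ) * t^2 + 2*θ * (s*t) := by
  have h := Real.geom_mean_le_arith_mean2_weighted (w₁ := 1-2*θ) (w₂ := 2*θ)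
    (p₁ := t^2) (p₂ := s*t) (by linarith) (by linarith) (by positivity) (by positivity) (by ring)
  calc s ^ (2*θ) * t ^ (2*(1-θ))
      = (t^2) ^ (1-2*θ) * (s*t) ^ (2*θ) := by
        rw [← Real.rpow_natCast t 2, ← Real.rpow_mul ht, Real.mul_rpow hs ht]
        push_cast
        rw [mul_comm (t ^ ((2:ℝ)*(1-2*θ))), mul_assoc, rp_mul_rp ht (by linarith)]
        ring_nf
    _ ≤ (1-2*θ) * t^2 + 2*θ * (s*t) := h

-- AM-GM case 2: lower bound for θ ≥ 1/2
private lemma amgm2 {θ s t : ℝ} (hθ0 : 0 < θ) (hθ1 : θ < 1) (hθ : 1 ≤ 2*θ)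
    (hs : 0 ≤ s) (ht : 0 ≤ t) :
    s ^ (2*θ) * t ^ (2*(1-θ)) ≤ (2*θ-1) * s^2 + (2-2*θ) * (s*t) := by
  have h := Real.geom_mean_le_arith_mean2_weighted (w₁ := 2*θ-1) (w₂ := 2-2*θ)
    (p₁ := s^2) (p₂ := s*t) (by linarith) (by linarith) (by positivity) (by positivity) (by ring)
  calc s ^ (2*θ) * t ^ (2*(1-θ))
      = (s^2) ^ (2*θ-1) * (s*t) ^ (2-2*θ) := by
        rw [← Real.rpow_natCast s 2, ← Real.rpow_mul hs, Real.mul_rpow hs ht]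
        push_cast
        rw [← mul_assoc, rp_mul_rp hs (by linarith)]
        ring_nf
    _ ≤ (2*θ-1) * s^2 + (2-2*θ) * (s*t) := h

-- AM-GM case 3: upper bound for θ ≤ 1/2
private lemma amgm3 {θ s t : ℝ} (hθ0 : 0 < θ) (hθ1 : θ < 1) (hθ : 2*θ ≤ 1)
    (hs : 0 ≤ s) (ht : 0 ≤ t) :
    2*(1-θ) * (s*t) ≤ s ^ (2*θ) * t ^ (2*(1-θ)) + (1-2*θ) * s^2 := by
  have hne : (1:ℝ) - θ ≠ 0 := by linarith
  have h := Real.geom_mean_le_arith_mean2_weighted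
    (w₁ := 1/(2*(1-θ))) (w₂ := (1-2*θ)/(2*(1-θ)))
    (p₁ := s ^ (2*θ) * t ^ (2*(1-θ))) (p₂ := s^2)
    (le_of_lt (div_pos one_pos (by linarith))) (div_nonneg (by linarith) (by linarith)) (by positivity) (by positivity)
    (by field_simp; try ring)
  have e1 : 2*θ*(1/(2*(1-θ))) + (2:ℝ)*((1-2*θ)/(2*(1-θ))) = 1 := by field_simp; try ring
  have e2 : 2*(1-θ)*(1/(2*(1-θ))) = (1:ℝ) := by field_simp
  have key : (s ^ (2*θ) * t ^ (2*(1-θ))) ^ (1/(2*(1-θ))) * (s^2) ^ ((1-2*θ)/(2*(1-θ))) = s * t := by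
    rw [Real.mul_rpow (by positivity) (by positivity),
      ← Real.rpow_natCast s 2, ← Real.rpow_mul hs, ← Real.rpow_mul hs, ← Real.rpow_mul ht]
    push_cast
    rw [show s ^ (2*θ*(1/(2*(1-θ)))) * t ^ (2*(1-θ)*(1/(2*(1-θ)))) * s ^ ((2:ℝ)*((1-2*θ)/(2*(1-θ))))
        = s ^ (2*θ*(1/(2*(1-θ)))) * s ^ ((2:ℝ)*((1-2*θ)/(2*(1-θ)))) * t ^ (2*(1-θ)*(1/(2*(1-θ)))) from by ring]
    rw [rp_mul_rp hs (by rw [e1]; norm_num), e1, e2, Real.rpow_one, Real.rpow_one]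
  rw [key] at h
  have h' := mul_le_mul_of_nonneg_left h (by linarith : (0:ℝ) ≤ 2*(1-θ))
  calc 2*(1-θ)*(s*t) ≤ 2*(1-θ) * (1/(2*(1-θ)) * (s ^ (2*θ) * t ^ (2*(1-θ))) + (1-2*θ)/(2*(1-θ)) * s^2) := h'
    _ = s ^ (2*θ) * t ^ (2*(1-θ)) + (1-2*θ) * s^2 := by field_simp; try ring

-- AM-GM case 4: upper bound for θ ≥ 1/2
private lemma amgm4 {θ s t : ℝ} (hθ0 : 0 < θ) (hθ1 : θ < 1) (hθ : 1 ≤ 2*θ)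
    (hs : 0 ≤ s) (ht : 0 ≤ t) :
    2*θ * (s*t) ≤ s ^ (2*θ) * t ^ (2*(1-θ)) + (2*θ-1) * t^2 := by
  have h := Real.geom_mean_le_arith_mean2_weighted
    (w₁ := 1/(2*θ)) (w₂ := (2*θ-1)/(2*θ))
    (p₁ := s ^ (2*θ) * t ^ (2*(1-θ))) (p₂ := t^2)
    (by positivity) (div_nonneg (by linarith) (by linarith)) (by positivity) (by positivity)
    (by field_simp; try ring)
  have e1 : 2*(1-θ)*(1/(2*θ)) + (2:ℝ)*((2*θ-1)/(2*θ)) = 1 := by field_simp; try ring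
  have e2 : 2*θ*(1/(2*θ)) = (1:ℝ) := by field_simp
  have key : (s ^ (2*θ) * t ^ (2*(1-θ))) ^ (1/(2*θ)) * (t^2) ^ ((2*θ-1)/(2*θ)) = s * t := by
    rw [Real.mul_rpow (by positivity) (by positivity),
      ← Real.rpow_natCast t 2, ← Real.rpow_mul hs, ← Real.rpow_mul ht, ← Real.rpow_mul ht]
    push_cast
    rw [show s ^ (2*θ*(1/(2*θ))) * t ^ (2*(1-θ)*(1/(2*θ))) * t ^ ((2:ℝ)*((2*θ-1)/(2*θ)))
        = s ^ (2*θ*(1/(2*θ))) * (t ^ (2*(1-θ)*(1/(2*θ))) * t ^ ((2:ℝ)*((2*θ-1)/(2*θ)))) from by ring]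
    rw [rp_mul_rp ht (by rw [e1]; norm_num), e1, e2, Real.rpow_one, Real.rpow_one]
  rw [key] at h
  have h' := mul_le_mul_of_nonneg_left h (by linarith : (0:ℝ) ≤ 2*θ)
  calc 2*θ*(s*t) ≤ 2*θ * (1/(2*θ) * (s ^ (2*θ) * t ^ (2*(1-θ))) + (2*θ-1)/(2*θ) * t^2) := h'
    _ = s ^ (2*θ) * t ^ (2*(1-θ)) + (2*θ-1) * t^2 := by field_simp; try ring

private lemma key_lemma {θ : ℝ} (hθ0 : 0 < θ) (hθ1 : θ < 1) {s t : ℝ} (hs : 0 ≤ s) (ht : 0 ≤ t) :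
    min θ (1-θ) * (s-t)^2 ≤ θ*s^2 + (1-θ)*t^2 - s ^ (2*θ) * t ^ (2*(1-θ)) ∧
    θ*s^2 + (1-θ)*t^2 - s ^ (2*θ) * t ^ (2*(1-θ)) ≤ max θ (1-θ) * (s-t)^2 := by
  have hsq : (s-t)^2 = s^2 - 2*(s*t) + t^2 := by ring
  rcases le_or_gt (2*θ) 1 with hc | hc
  · have hmin : min θ (1-θ) = θ := min_eq_left (by linarith)
    have hmax : max θ (1-θ) = 1-θ := max_eq_right (by linarith)
    have h1 := amgm1 hθ0 hθ1 hc hs ht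
    have h3 := amgm3 hθ0 hθ1 hc hs ht
    rw [hmin, hmax]
    constructor <;> nlinarith [sq_nonneg (s-t)]
  · have hmin : min θ (1-θ) = 1-θ := min_eq_right (by linarith)
    have hmax : max θ (1-θ) = θ := max_eq_left (by linarith)
    have h2 := amgm2 hθ0 hθ1 (le_of_lt hc) hs ht
    have h4 := amgm4 hθ0 hθ1 (le_of_lt hc) hs ht
    rw [hmin, hmax]
    constructor <;> nlinarith [sq_nonneg (s-t)]

/-- Taylor-remainder equivalence for the pressure potential: for `γ > 1` there are
constants `0 < c ≤ C` depending only on `γ` such that for all `a, b ≥ 0`,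
`c (a^{γ/2} − b^{γ/2})² ≤ a^γ/γ − b^γ/γ − b^{γ−1}(a − b) ≤ C (a^{γ/2} − b^{γ/2})²`. -/
theorem taylor_remainder_equiv (γ : ℝ) (hγ : 1 < γ) :
    ∃ c C : ℝ, 0 < c ∧ c ≤ C ∧
      ∀ a b : ℝ, 0 ≤ a → 0 ≤ b →
        c * (a ^ (γ/2) - b ^ (γ/2)) ^ 2
            ≤ a ^ γ / γ - b ^ γ / γ - b ^ (γ - 1) * (a - b) ∧
        a ^ γ / γ - b ^ γ / γ - b ^ (γ - 1) * (a - b)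
            ≤ C * (a ^ (γ/2) - b ^ (γ/2)) ^ 2 := by
  have hγ0 : (0:ℝ) < γ := by linarith
  have hγne : γ ≠ 0 := ne_of_gt hγ0
  set θ := 1/γ with hθdef
  have hθ0 : 0 < θ := by positivity
  have hθ1 : θ < 1 := by rw [hθdef]; rw [div_lt_one hγ0]; linarith
  refine ⟨min θ (1-θ), max θ (1-θ), lt_min hθ0 (by linarith), min_le_max, ?_⟩
  intro a b ha hb
  set s := a ^ (γ/2) with hsdef
  set t := b ^ (γ/2) with htdef
  have hs : 0 ≤ s := Real.rpow_nonneg ha _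
  have ht : 0 ≤ t := Real.rpow_nonneg hb _
  have hs2 : s^2 = a ^ γ := by
    rw [hsdef, ← Real.rpow_natCast (a ^ (γ/2)) 2, ← Real.rpow_mul ha]
    norm_num
  have ht2 : t^2 = b ^ γ := by
    rw [htdef, ← Real.rpow_natCast (b ^ (γ/2)) 2, ← Real.rpow_mul hb]
    norm_num
  have hA : s ^ (2*θ) = a := by
    rw [hsdef, ← Real.rpow_mul ha]
    rw [show γ/2 * (2*θ) = 1 by rw [hθdef]; field_simp]
    exact Real.rpow_one a
  have hB : t ^ (2*(1-θ)) = b ^ (γ-1) := by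
    rw [htdef, ← Real.rpow_mul hb]
    congr 1
    rw [hθdef]; field_simp
  have hbγ : b ^ (γ-1) * b = b ^ γ := by
    nth_rewrite 2 [← Real.rpow_one b]
    rw [rp_mul_rp hb (by norm_num; linarith), sub_add_cancel]
  have hFeq : a ^ γ / γ - b ^ γ / γ - b ^ (γ-1) * (a - b)
      = θ*s^2 + (1-θ)*t^2 - s ^ (2*θ) * t ^ (2*(1-θ)) := by
    rw [hs2, ht2, hA, hB, hθdef]
    field_simp
    nlinarith [hbγ]
  rw [hFeq]
  exact key_lemma hθ0 hθ1 hs ht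
end
end

section
/- Relative-energy coercivity under equal mass (the key estimate in the proof of the a priori bounds, Lemma 5.1 of the paper): Let γ > 1. There exists a constant C ≥ 1, depending only on γ, such that for every measure space (X, μ) with 0 < μ(X) < ∞ and all measurable ρ, ρ̄ : X → [0,∞) with ρ, ρ̄ ∈ L^γ(μ) and ∫_X ρ dμ = ∫_X ρ̄ dμ, setting m = μ(X)^{−1} ∫_X ρ dμ, one has ∫_X (ρ^γ − ρ̄^γ) dμ ≥ C^{−1} ∫_X |ρ^{γ/2} − m^{γ/2}|² dμ − C ∫_X |ρ̄^{γ/2} − m^{γ/2}|² dμ. -/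
/-! With `B(t, m) = t^γ - m^γ - γ m^(γ-1) (t - m)` the Bregman divergence of `t ↦ t^γ`, equal
mass gives `∫ (ρ^γ - ρ̄^γ) = ∫ B(ρ, m) - ∫ B(ρ̄, m)`, so it suffices to compare `B(t, m)` with
`(t^(γ/2) - m^(γ/2))²` pointwise, from below by `min 1 (γ - 1)` and from above by `max 1 (γ - 1)`.
By homogeneity `m = 1`. Bernoulli's inequality for the exponent `γ/2` gives the lower bound when
`γ ≥ 2` and the upper bound when `γ ≤ 2`. The other bound in each regime is the same inequality for
the conjugate exponent `γ'`, because Legendre duality turns `B_γ(s, 1) - (γ - 1)(s^(γ/2) - 1)²` into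
`(γ - 1) s^γ` times the corresponding gap for `γ'` at the point `s^(1-γ)`. -/

open MeasureTheory Set Real

noncomputable def bregmanRpow (γ x y : ℝ) : ℝ := x ^ γ - y ^ γ - γ * y ^ (γ - 1) * (x - y)

lemma bregmanRpow_one_right (γ x : ℝ) : bregmanRpow γ x 1 = x ^ γ - 1 - γ * (x - 1) := by
  simp [bregmanRpow]

lemma bregmanRpow_zero_right {γ : ℝ} (hγ : 1 < γ) (x : ℝ) : bregmanRpow γ x 0 = x ^ γ := by
  simp [bregmanRpow, zero_rpow (by linarith : γ ≠ 0), zero_rpow (by linarith : γ - 1 ≠ 0)]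

lemma bregmanRpow_mul_self {γ m s : ℝ} (hm : 0 < m) (hs : 0 ≤ s) :
    bregmanRpow γ (m * s) m = m ^ γ * bregmanRpow γ s 1 := by
  have h : m ^ (γ - 1) * m = m ^ γ := by
    rw [← rpow_add_one hm.ne']
    simp
  rw [bregmanRpow, bregmanRpow_one_right, mul_rpow hm.le hs]
  linear_combination -γ * (s - 1) * h

lemma rpow_div_two_mul_self {t : ℝ} (ht : 0 ≤ t) (p : ℝ) : t ^ (p / 2) * t ^ (p / 2) = t ^ p := by
  rw [← sq, ← rpow_natCast, ← rpow_mul ht]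
  norm_num

lemma sq_mul_rpow_div_two_sub {γ m s : ℝ} (hm : 0 ≤ m) (hs : 0 ≤ s) :
    ((m * s) ^ (γ / 2) - m ^ (γ / 2)) ^ 2 = m ^ γ * (s ^ (γ / 2) - 1) ^ 2 := by
  rw [mul_rpow hm hs, ← rpow_div_two_mul_self hm γ]
  ring

lemma sq_rpow_div_two_sub_one_le_bregmanRpow {p t : ℝ} (hp : 2 ≤ p) (ht : 0 ≤ t) :
    (t ^ (p / 2) - 1) ^ 2 ≤ bregmanRpow p t 1 := by
  have hbernoulli : 1 + p / 2 * (t - 1) ≤ t ^ (p / 2) := by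
    simpa using one_add_mul_self_le_rpow_one_add (by linarith : (-1 : ℝ) ≤ t - 1)
      (by linarith : (1 : ℝ) ≤ p / 2)
  rw [bregmanRpow_one_right, ← rpow_div_two_mul_self ht p]
  nlinarith

lemma bregmanRpow_le_sq_rpow_div_two_sub_one {p t : ℝ} (hp0 : 0 ≤ p) (hp : p ≤ 2) (ht : 0 ≤ t) :
    bregmanRpow p t 1 ≤ (t ^ (p / 2) - 1) ^ 2 := by
  have hbernoulli : t ^ (p / 2) ≤ 1 + p / 2 * (t - 1) := by
    simpa using rpow_one_add_le_one_add_mul_self (by linarith : (-1 : ℝ) ≤ t - 1)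
      (by linarith : (0 : ℝ) ≤ p / 2) (by linarith : p / 2 ≤ 1)
  rw [bregmanRpow_one_right, ← rpow_div_two_mul_self ht p]
  nlinarith

lemma bregmanRpow_sub_sq_eq_of_holderConjugate {p q s : ℝ} (hpq : p.HolderConjugate q)
    (hs : 0 ≤ s) :
    bregmanRpow p s 1 - (p - 1) * (s ^ (p / 2) - 1) ^ 2
      = (p - 1) * s ^ p * (bregmanRpow q (s ^ (1 - p)) 1 - ((s ^ (1 - p)) ^ (q / 2) - 1) ^ 2) := by
  have hp := hpq.pos
  have hconj := hpq.sub_one_mul_conj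
  rcases hs.eq_or_lt with rfl | hs
  · simp [bregmanRpow_one_right, zero_rpow hp.ne', zero_rpow (half_pos hp).ne']
    ring
  have hq : (s ^ (1 - p)) ^ q = (s ^ p)⁻¹ := by
    rw [← rpow_mul hs.le, ← rpow_neg hs.le]
    congr 1
    linarith
  have hq_half : (s ^ (1 - p)) ^ (q / 2) = (s ^ (p / 2))⁻¹ := by
    rw [← rpow_mul hs.le, ← rpow_neg hs.le]
    congr 1
    linarith
  have hsq := rpow_div_two_mul_self hs.le p
  have hs_eq : s ^ (p / 2) * s ^ (p / 2) * s ^ (1 - p) = s := by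
    rw [hsq, ← rpow_add hs]
    simp
  have hne : s ^ (p / 2) ≠ 0 := (rpow_pos_of_pos hs _).ne'
  rw [bregmanRpow_one_right, bregmanRpow_one_right, hq, hq_half, ← hsq]
  field_simp
  linear_combination (s - s ^ (p / 2) * s ^ (p / 2)) * hconj + (p - 1) * q * hs_eq

lemma sub_one_mul_sq_le_bregmanRpow_of_le_two {γ s : ℝ} (hγ : 1 < γ) (hγ2 : γ ≤ 2)
    (hs : 0 ≤ s) : (γ - 1) * (s ^ (γ / 2) - 1) ^ 2 ≤ bregmanRpow γ s 1 := by
  have hconj := HolderConjugate.conjExponent hγ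
  have hq : 2 ≤ conjExponent γ := by nlinarith [hconj.sub_one_mul_conj]
  have hdual := bregmanRpow_sub_sq_eq_of_holderConjugate hconj hs
  have hgap := sq_rpow_div_two_sub_one_le_bregmanRpow hq (rpow_nonneg hs (1 - γ))
  nlinarith [mul_nonneg (mul_nonneg (sub_nonneg.2 hγ.le) (rpow_nonneg hs γ)) (sub_nonneg.2 hgap)]

lemma bregmanRpow_le_sub_one_mul_sq_of_two_le {γ s : ℝ} (hγ2 : 2 ≤ γ) (hs : 0 ≤ s) :
    bregmanRpow γ s 1 ≤ (γ - 1) * (s ^ (γ / 2) - 1) ^ 2 := by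
  have hconj := HolderConjugate.conjExponent (by linarith : 1 < γ)
  have hq : conjExponent γ ≤ 2 := by nlinarith [hconj.sub_one_mul_conj]
  have hdual := bregmanRpow_sub_sq_eq_of_holderConjugate hconj hs
  have hgap := bregmanRpow_le_sq_rpow_div_two_sub_one hconj.symm.nonneg hq (rpow_nonneg hs (1 - γ))
  nlinarith [mul_nonneg (mul_nonneg (by linarith : (0 : ℝ) ≤ γ - 1) (rpow_nonneg hs γ))
    (sub_nonneg.2 hgap)]

lemma min_mul_sq_le_bregmanRpow_one {γ s : ℝ} (hγ : 1 < γ) (hs : 0 ≤ s) :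
    min 1 (γ - 1) * (s ^ (γ / 2) - 1) ^ 2 ≤ bregmanRpow γ s 1 := by
  rcases le_total γ 2 with hγ2 | hγ2
  · exact (mul_le_mul_of_nonneg_right (min_le_right _ _) (sq_nonneg _)).trans
      (sub_one_mul_sq_le_bregmanRpow_of_le_two hγ hγ2 hs)
  · exact (mul_le_mul_of_nonneg_right (min_le_left _ _) (sq_nonneg _)).trans
      ((one_mul _).trans_le (sq_rpow_div_two_sub_one_le_bregmanRpow hγ2 hs))

lemma bregmanRpow_one_le_max_mul_sq {γ s : ℝ} (hγ : 1 < γ) (hs : 0 ≤ s) :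
    bregmanRpow γ s 1 ≤ max 1 (γ - 1) * (s ^ (γ / 2) - 1) ^ 2 := by
  rcases le_total γ 2 with hγ2 | hγ2
  · exact ((bregmanRpow_le_sq_rpow_div_two_sub_one (by linarith) hγ2 hs).trans_eq
      (one_mul _).symm).trans (mul_le_mul_of_nonneg_right (le_max_left _ _) (sq_nonneg _))
  · exact (bregmanRpow_le_sub_one_mul_sq_of_two_le hγ2 hs).trans
      (mul_le_mul_of_nonneg_right (le_max_right _ _) (sq_nonneg _))

lemma min_mul_sq_le_bregmanRpow {γ t m : ℝ} (hγ : 1 < γ) (ht : 0 ≤ t) (hm : 0 ≤ m) :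
    min 1 (γ - 1) * (t ^ (γ / 2) - m ^ (γ / 2)) ^ 2 ≤ bregmanRpow γ t m := by
  rcases hm.eq_or_lt with rfl | hm
  · rw [bregmanRpow_zero_right hγ, zero_rpow (by linarith), sub_zero, sq,
      rpow_div_two_mul_self ht]
    exact mul_le_of_le_one_left (rpow_nonneg ht γ) (min_le_left _ _)
  · obtain ⟨s, hs, rfl⟩ : ∃ s, 0 ≤ s ∧ t = m * s := ⟨t / m, div_nonneg ht hm.le, by field_simp⟩
    rw [bregmanRpow_mul_self hm hs, sq_mul_rpow_div_two_sub hm.le hs, mul_left_comm]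
    exact mul_le_mul_of_nonneg_left (min_mul_sq_le_bregmanRpow_one hγ hs) (rpow_nonneg hm.le γ)

lemma bregmanRpow_le_max_mul_sq {γ t m : ℝ} (hγ : 1 < γ) (ht : 0 ≤ t) (hm : 0 ≤ m) :
    bregmanRpow γ t m ≤ max 1 (γ - 1) * (t ^ (γ / 2) - m ^ (γ / 2)) ^ 2 := by
  rcases hm.eq_or_lt with rfl | hm
  · rw [bregmanRpow_zero_right hγ, zero_rpow (by linarith), sub_zero, sq,
      rpow_div_two_mul_self ht]
    exact le_mul_of_one_le_left (rpow_nonneg ht γ) (le_max_left _ _)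
  · obtain ⟨s, hs, rfl⟩ : ∃ s, 0 ≤ s ∧ t = m * s := ⟨t / m, div_nonneg ht hm.le, by field_simp⟩
    rw [bregmanRpow_mul_self hm hs, sq_mul_rpow_div_two_sub hm.le hs, mul_left_comm]
    exact mul_le_mul_of_nonneg_left (bregmanRpow_one_le_max_mul_sq hγ hs) (rpow_nonneg hm.le γ)

section Integral

variable {X : Type*} [MeasurableSpace X] {μ : Measure X} {γ m : ℝ} {f : X → ℝ}

lemma integrable_rpow_of_memLp (hγ : 0 < γ) (hf0 : ∀ x, 0 ≤ f x)
    (hf : MemLp f (ENNReal.ofReal γ) μ) : Integrable (fun x => f x ^ γ) μ := by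
  simpa [ENNReal.toReal_ofReal hγ.le, abs_of_nonneg (hf0 _)] using
    hf.integrable_norm_rpow (ENNReal.ofReal_pos.2 hγ).ne' ENNReal.ofReal_ne_top

lemma memLp_two_rpow_div_two_of_memLp (hγ : 0 < γ) (hf0 : ∀ x, 0 ≤ f x)
    (hf : MemLp f (ENNReal.ofReal γ) μ) : MemLp (fun x => f x ^ (γ / 2)) 2 μ := by
  have hexp : ENNReal.ofReal γ / ENNReal.ofReal (γ / 2) = 2 := by
    rw [← ENNReal.ofReal_ofNat 2, ← ENNReal.ofReal_div_of_pos (half_pos hγ)]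
    congr 1
    field_simp
  simpa [ENNReal.toReal_ofReal (half_pos hγ).le, abs_of_nonneg (hf0 _), hexp] using
    hf.norm_rpow_div (ENNReal.ofReal (γ / 2))

variable [IsFiniteMeasure μ]

lemma integrable_bregmanRpow (hf : Integrable f μ) (hfγ : Integrable (fun x => f x ^ γ) μ) :
    Integrable (fun x => bregmanRpow γ (f x) m) μ :=
  (hfγ.sub (integrable_const _)).sub ((hf.sub (integrable_const _)).const_mul _)

lemma integral_bregmanRpow (hf : Integrable f μ) (hfγ : Integrable (fun x => f x ^ γ) μ) :
    ∫ x, bregmanRpow γ (f x) m ∂μ = ∫ x, f x ^ γ ∂μ - μ.real univ * m ^ γ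
      - γ * m ^ (γ - 1) * (∫ x, f x ∂μ - μ.real univ * m) := by
  have hfγ_sub : Integrable (fun x => f x ^ γ - m ^ γ) μ := hfγ.sub (integrable_const _)
  have hf_sub : Integrable (fun x => f x - m) μ := hf.sub (integrable_const _)
  unfold bregmanRpow
  rw [integral_sub hfγ_sub (hf_sub.const_mul _), integral_sub hfγ (integrable_const _),
    integral_const_mul, integral_sub hf (integrable_const _)]
  simp

lemma integrable_bregmanRpow_of_memLp (hγ : 1 ≤ γ) (hf0 : ∀ x, 0 ≤ f x)
    (hf : MemLp f (ENNReal.ofReal γ) μ) : Integrable (fun x => bregmanRpow γ (f x) m) μ :=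
  integrable_bregmanRpow (hf.integrable (ENNReal.one_le_ofReal.2 hγ))
    (integrable_rpow_of_memLp (by linarith) hf0 hf)

lemma integral_rpow_sub_rpow_eq_integral_bregmanRpow_sub {g : X → ℝ} (hγ : 1 ≤ γ)
    (hf0 : ∀ x, 0 ≤ f x) (hg0 : ∀ x, 0 ≤ g x) (hf : MemLp f (ENNReal.ofReal γ) μ)
    (hg : MemLp g (ENNReal.ofReal γ) μ) (hfm : ∫ x, f x ∂μ = μ.real univ * m)
    (hfg : ∫ x, f x ∂μ = ∫ x, g x ∂μ) :
    ∫ x, (f x ^ γ - g x ^ γ) ∂μ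
      = ∫ x, bregmanRpow γ (f x) m ∂μ - ∫ x, bregmanRpow γ (g x) m ∂μ := by
  have hfγ := integrable_rpow_of_memLp (by linarith) hf0 hf
  have hgγ := integrable_rpow_of_memLp (by linarith) hg0 hg
  rw [integral_sub hfγ hgγ, integral_bregmanRpow (hf.integrable (ENNReal.one_le_ofReal.2 hγ)) hfγ,
    integral_bregmanRpow (hg.integrable (ENNReal.one_le_ofReal.2 hγ)) hgγ, ← hfg, hfm]
  ring

lemma integrable_sq_rpow_div_two_sub_of_memLp (hγ : 0 < γ) (hf0 : ∀ x, 0 ≤ f x)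
    (hf : MemLp f (ENNReal.ofReal γ) μ) (c : ℝ) :
    Integrable (fun x => (f x ^ (γ / 2) - c) ^ 2) μ :=
  ((memLp_two_rpow_div_two_of_memLp hγ hf0 hf).sub (memLp_const c)).integrable_sq

lemma min_mul_integral_sq_le_integral_bregmanRpow (hγ : 1 < γ) (hm : 0 ≤ m)
    (hf0 : ∀ x, 0 ≤ f x) (hf : MemLp f (ENNReal.ofReal γ) μ) :
    min 1 (γ - 1) * ∫ x, (f x ^ (γ / 2) - m ^ (γ / 2)) ^ 2 ∂μ
      ≤ ∫ x, bregmanRpow γ (f x) m ∂μ := by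
  rw [← integral_const_mul]
  exact integral_mono
    ((integrable_sq_rpow_div_two_sub_of_memLp (by linarith) hf0 hf _).const_mul _)
    (integrable_bregmanRpow_of_memLp hγ.le hf0 hf) fun x => min_mul_sq_le_bregmanRpow hγ (hf0 x) hm

lemma integral_bregmanRpow_le_max_mul_integral_sq (hγ : 1 < γ) (hm : 0 ≤ m)
    (hf0 : ∀ x, 0 ≤ f x) (hf : MemLp f (ENNReal.ofReal γ) μ) :
    ∫ x, bregmanRpow γ (f x) m ∂μ
      ≤ max 1 (γ - 1) * ∫ x, (f x ^ (γ / 2) - m ^ (γ / 2)) ^ 2 ∂μ := by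
  rw [← integral_const_mul]
  exact integral_mono (integrable_bregmanRpow_of_memLp hγ.le hf0 hf)
    ((integrable_sq_rpow_div_two_sub_of_memLp (by linarith) hf0 hf _).const_mul _)
    fun x => bregmanRpow_le_max_mul_sq hγ (hf0 x) hm

end Integral

section MaxSelfInv

variable {a : ℝ}

lemma one_le_max_self_inv (ha : 0 < a) : 1 ≤ max a a⁻¹ := by
  rcases le_total a 1 with h | h
  · exact le_max_of_le_right ((one_le_inv₀ ha).2 h)
  · exact le_max_of_le_left h

lemma inv_max_self_inv_le_min_one (ha : 0 < a) : (max a a⁻¹)⁻¹ ≤ min 1 a :=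
  le_min (inv_le_one_of_one_le₀ (one_le_max_self_inv ha))
    ((inv_le_comm₀ (zero_lt_one.trans_le (one_le_max_self_inv ha)) ha).2 (le_max_right _ _))

lemma max_one_le_max_self_inv (ha : 0 < a) : max 1 a ≤ max a a⁻¹ :=
  max_le (one_le_max_self_inv ha) (le_max_left _ _)

end MaxSelfInv

/-- Relative-energy coercivity under equal mass: for `γ > 1` there is `C ≥ 1`, depending
only on `γ`, such that on any finite measure space, for nonnegative `ρ, ρ̄ ∈ L^γ` with the
same total mass and `m` the average of `ρ`,
`∫ (ρ^γ − ρ̄^γ) ≥ C⁻¹ ∫ |ρ^{γ/2} − m^{γ/2}|² − C ∫ |ρ̄^{γ/2} − m^{γ/2}|²`. -/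
theorem relative_energy_coercivity (γ : ℝ) (hγ : 1 < γ) :
    ∃ C : ℝ, 1 ≤ C ∧
      ∀ (X : Type*) [MeasurableSpace X] (μ : Measure X),
        0 < μ univ → μ univ < ⊤ →
        ∀ ρ ρbar : X → ℝ, Measurable ρ → Measurable ρbar →
          (∀ x, 0 ≤ ρ x) → (∀ x, 0 ≤ ρbar x) →
          MemLp ρ (ENNReal.ofReal γ) μ → MemLp ρbar (ENNReal.ofReal γ) μ →
          (∫ x, ρ x ∂μ) = (∫ x, ρbar x ∂μ) →
          C⁻¹ * (∫ x, |ρ x ^ (γ/2)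
                  - ((μ univ).toReal⁻¹ * ∫ y, ρ y ∂μ) ^ (γ/2)| ^ 2 ∂μ)
              - C * (∫ x, |ρbar x ^ (γ/2)
                  - ((μ univ).toReal⁻¹ * ∫ y, ρ y ∂μ) ^ (γ/2)| ^ 2 ∂μ)
            ≤ ∫ x, (ρ x ^ γ - ρbar x ^ γ) ∂μ := by
  have hκ : 0 < γ - 1 := sub_pos.2 hγ
  refine ⟨max (γ - 1) (γ - 1)⁻¹, one_le_max_self_inv hκ, ?_⟩
  intro X _ μ hμ0 hμ ρ ρbar _ _ hρ0 hρbar0 hρ hρbar hmass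
  have : IsFiniteMeasure μ := ⟨hμ⟩
  set m := (μ univ).toReal⁻¹ * ∫ y, ρ y ∂μ
  have hm : 0 ≤ m := mul_nonneg (inv_nonneg.2 ENNReal.toReal_nonneg) (integral_nonneg hρ0)
  have hρm : ∫ x, ρ x ∂μ = μ.real univ * m := by
    rw [measureReal_def, mul_inv_cancel_left₀ (ENNReal.toReal_pos hμ0.ne' hμ.ne).ne']
  simp only [sq_abs]
  rw [integral_rpow_sub_rpow_eq_integral_bregmanRpow_sub hγ.le hρ0 hρbar0 hρ hρbar hρm hmass]
  exact sub_le_sub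
    ((mul_le_mul_of_nonneg_right (inv_max_self_inv_le_min_one hκ)
      (integral_nonneg fun _ => sq_nonneg _)).trans
        (min_mul_integral_sq_le_integral_bregmanRpow hγ hm hρ0 hρ))
    ((integral_bregmanRpow_le_max_mul_integral_sq hγ hm hρbar0 hρbar).trans
      (mul_le_mul_of_nonneg_right (max_one_le_max_self_inv hκ)
        (integral_nonneg fun _ => sq_nonneg _)))
end

section
/- Weighted L¹ estimate via γ/2-powers (used in Steps 2 and 4 of the convergence proof of the paper's main evolutionary theorem): Let γ ≥ 1 and let (X, μ) be a measure space with 0 < μ(X) < ∞. For every measurable ρ : X → [0,∞), every constant c ≥ 0, and every measurable u : X → ℝ³ such that ρ|u|², |u|² and |ρ^{γ/2} − c^{γ/2}|² are μ-integrable, one has ∫_X |ρ − c| |u| dμ ≤ μ(X)^{(γ−1)/(2γ)} (∫_X |ρ^{γ/2} − c^{γ/2}|² dμ)^{1/(2γ)} [ (∫_X ρ |u|² dμ)^{1/2} + c^{1/2} (∫_X |u|² dμ)^{1/2} ]. -/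
open MeasureTheory Set

/-!
Since `|ρ - c| = |√ρ - √c| (√ρ + √c)`, Cauchy–Schwarz applied to the two resulting terms bounds
the left side by `‖√ρ - √c‖₂ ((∫ ρ |u|²)^{1/2} + √c (∫ |u|²)^{1/2})`. Superadditivity of
`t ↦ t^γ` on `[0, ∞)` gives `|√ρ - √c|^{2γ} ≤ |ρ^{γ/2} - c^{γ/2}|²`, and on a finite measure space
Hölder's inequality bounds `‖·‖₂` by `μ(X)^{(γ-1)/(2γ)} ‖·‖_{2γ}`.
-/

namespace Real

lemma sub_rpow_le_rpow_sub_rpow {a b p : ℝ} (hb : 0 ≤ b) (hba : b ≤ a) (hp : 1 ≤ p) :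
    (a - b) ^ p ≤ a ^ p - b ^ p := by
  have h := add_rpow_le_rpow_add (sub_nonneg.2 hba) hb hp
  rw [sub_add_cancel] at h
  linarith

lemma abs_sub_rpow_le_abs_rpow_sub {a b p : ℝ} (ha : 0 ≤ a) (hb : 0 ≤ b) (hp : 1 ≤ p) :
    |a - b| ^ p ≤ |a ^ p - b ^ p| := by
  wlog hba : b ≤ a generalizing a b
  · rw [abs_sub_comm, abs_sub_comm (a ^ p)]
    exact this hb ha (le_of_not_ge hba)
  rw [abs_of_nonneg (sub_nonneg.2 hba),
    abs_of_nonneg (sub_nonneg.2 (rpow_le_rpow hb hba (by linarith)))]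
  exact sub_rpow_le_rpow_sub_rpow hb hba hp

lemma abs_sqrt_sub_sqrt_rpow_le {a b p : ℝ} (ha : 0 ≤ a) (hb : 0 ≤ b) (hp : 1 ≤ p) :
    |√a - √b| ^ p ≤ |a ^ (p / 2) - b ^ (p / 2)| := by
  have hsqrt {t : ℝ} (ht : 0 ≤ t) : √t ^ p = t ^ (p / 2) := by
    rw [sqrt_eq_rpow, ← rpow_mul ht, one_div_mul_eq_div]
  simpa only [hsqrt ha, hsqrt hb] using
    abs_sub_rpow_le_abs_rpow_sub (sqrt_nonneg a) (sqrt_nonneg b) hp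

lemma abs_sub_eq_abs_sqrt_sub_sqrt_mul {a b : ℝ} (ha : 0 ≤ a) (hb : 0 ≤ b) :
    |a - b| = |√a - √b| * (√a + √b) := by
  rw [← abs_of_nonneg (add_nonneg (sqrt_nonneg a) (sqrt_nonneg b)), ← abs_mul, mul_comm,
    ← sq_sub_sq, sq_sqrt ha, sq_sqrt hb]

end Real

section

variable {X : Type*} [MeasurableSpace X] {μ : Measure X}

lemma integral_mul_le_L2_mul_L2_of_nonneg {f g : X → ℝ} (hf0 : 0 ≤ᵐ[μ] f) (hg0 : 0 ≤ᵐ[μ] g)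
    (hf : MemLp f 2 μ) (hg : MemLp g 2 μ) :
    ∫ x, f x * g x ∂μ ≤ (∫ x, f x ^ 2 ∂μ) ^ (1 / 2 : ℝ) * (∫ x, g x ^ 2 ∂μ) ^ (1 / 2 : ℝ) := by
  have h := integral_mul_le_Lp_mul_Lq_of_nonneg Real.HolderConjugate.two_two hf0 hg0
    (by simpa using hf) (by simpa using hg)
  simpa only [Real.rpow_two] using h

lemma integral_le_measureReal_univ_rpow_mul_integral_rpow [IsFiniteMeasure μ] {f : X → ℝ}
    {p : ℝ} (hp : 1 ≤ p) (hf0 : 0 ≤ᵐ[μ] f) (hf : AEStronglyMeasurable f μ)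
    (hfp : Integrable (fun x => f x ^ p) μ) :
    ∫ x, f x ∂μ ≤ μ.real univ ^ (1 - 1 / p) * (∫ x, f x ^ p ∂μ) ^ (1 / p) := by
  rcases hp.eq_or_lt with rfl | hp
  · simp
  have hpq := Real.HolderConjugate.conjExponent hp
  have hfLp : MemLp f (ENNReal.ofReal p) μ := by
    refine (integrable_norm_rpow_iff hf (by simpa using hpq.pos) ENNReal.ofReal_ne_top).1 ?_
    refine hfp.congr ?_
    filter_upwards [hf0] with x hx
    rw [ENNReal.toReal_ofReal hpq.nonneg, Real.norm_of_nonneg hx]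
  have h := integral_mul_le_Lp_mul_Lq_of_nonneg hpq hf0 (ae_of_all _ fun _ => zero_le_one)
    hfLp (memLp_const 1)
  rw [one_div p.conjExponent, ← hpq.one_sub_inv, ← one_div] at h
  simpa [mul_comm] using h

lemma integral_sq_rpow_one_half_le [IsFiniteMeasure μ] {f : X → ℝ} {p : ℝ} (hp : 1 ≤ p)
    (hf : AEStronglyMeasurable f μ) (hfp : Integrable (fun x => |f x| ^ (2 * p)) μ) :
    (∫ x, f x ^ 2 ∂μ) ^ (1 / 2 : ℝ)
      ≤ μ.real univ ^ ((p - 1) / (2 * p)) * (∫ x, |f x| ^ (2 * p) ∂μ) ^ (1 / (2 * p)) := by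
  have hsq (x : X) : (f x ^ 2) ^ p = |f x| ^ (2 * p) := by
    rw [← sq_abs, ← Real.rpow_natCast, ← Real.rpow_mul (abs_nonneg _), Nat.cast_ofNat]
  have h := integral_le_measureReal_univ_rpow_mul_integral_rpow hp
    (ae_of_all _ fun x => sq_nonneg (f x)) (hf.pow 2) (by simpa only [hsq] using hfp)
  simp only [hsq] at h
  have hp0 : 0 < p := by linarith
  calc (∫ x, f x ^ 2 ∂μ) ^ (1 / 2 : ℝ)
      ≤ (μ.real univ ^ (1 - 1 / p) * (∫ x, |f x| ^ (2 * p) ∂μ) ^ (1 / p)) ^ (1 / 2 : ℝ) := by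
        gcongr
    _ = μ.real univ ^ ((p - 1) / (2 * p)) * (∫ x, |f x| ^ (2 * p) ∂μ) ^ (1 / (2 * p)) := by
        have hI : 0 ≤ ∫ x, |f x| ^ (2 * p) ∂μ := integral_nonneg fun x => by positivity
        rw [Real.mul_rpow (by positivity) (by positivity), ← Real.rpow_mul measureReal_nonneg,
          ← Real.rpow_mul hI]
        congr 2 <;> field_simp

lemma integral_abs_sub_mul_le {ρ v : X → ℝ} {c : ℝ} (hρm : Measurable ρ) (hρ0 : ∀ x, 0 ≤ ρ x)
    (hc : 0 ≤ c) (hvm : AEStronglyMeasurable v μ) (hv0 : ∀ x, 0 ≤ v x)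
    (hρv : Integrable (fun x => ρ x * v x ^ 2) μ) (hv : Integrable (fun x => v x ^ 2) μ)
    (hρc : Integrable (fun x => |√(ρ x) - √c| ^ 2) μ) :
    ∫ x, |ρ x - c| * v x ∂μ ≤ (∫ x, |√(ρ x) - √c| ^ 2 ∂μ) ^ (1 / 2 : ℝ)
      * ((∫ x, ρ x * v x ^ 2 ∂μ) ^ (1 / 2 : ℝ) + √c * (∫ x, v x ^ 2 ∂μ) ^ (1 / 2 : ℝ)) := by
  set h : X → ℝ := fun x => |√(ρ x) - √c|
  have hh0 : 0 ≤ᵐ[μ] h := ae_of_all _ fun x => abs_nonneg _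
  have hsq (x : X) : (√(ρ x) * v x) ^ 2 = ρ x * v x ^ 2 := by rw [mul_pow, Real.sq_sqrt (hρ0 x)]
  have hL2 : MemLp h 2 μ :=
    (memLp_two_iff_integrable_sq (by fun_prop)).2 hρc
  have hρvL2 : MemLp (fun x => √(ρ x) * v x) 2 μ :=
    (memLp_two_iff_integrable_sq (by fun_prop)).2 (by simpa only [hsq] using hρv)
  have hvL2 : MemLp v 2 μ := (memLp_two_iff_integrable_sq hvm).2 hv
  have hsplit : ∫ x, |ρ x - c| * v x ∂μ
      = ∫ x, h x * (√(ρ x) * v x) ∂μ + √c * ∫ x, h x * v x ∂μ := by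
    have hi₁ : Integrable (fun x => h x * (√(ρ x) * v x)) μ := hL2.integrable_mul hρvL2
    have hi₂ : Integrable (fun x => h x * v x) μ := hL2.integrable_mul hvL2
    rw [← integral_const_mul, ← integral_add hi₁ (hi₂.const_mul _)]
    refine integral_congr_ae (ae_of_all _ fun x => ?_)
    simp only [h, Real.abs_sub_eq_abs_sqrt_sub_sqrt_mul (hρ0 x) hc]
    ring
  have h₁ := integral_mul_le_L2_mul_L2_of_nonneg hh0
    (ae_of_all _ fun x => mul_nonneg (Real.sqrt_nonneg _) (hv0 x)) hL2 hρvL2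
  have h₂ := integral_mul_le_L2_mul_L2_of_nonneg hh0 (ae_of_all _ hv0) hL2 hvL2
  simp only [hsq] at h₁
  calc ∫ x, |ρ x - c| * v x ∂μ
      = ∫ x, h x * (√(ρ x) * v x) ∂μ + √c * ∫ x, h x * v x ∂μ := hsplit
    _ ≤ (∫ x, h x ^ 2 ∂μ) ^ (1 / 2 : ℝ) * (∫ x, ρ x * v x ^ 2 ∂μ) ^ (1 / 2 : ℝ)
        + √c * ((∫ x, h x ^ 2 ∂μ) ^ (1 / 2 : ℝ) * (∫ x, v x ^ 2 ∂μ) ^ (1 / 2 : ℝ)) := by gcongr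
    _ = _ := by ring

end

theorem weighted_L1_estimate_general (γ : ℝ) (hγ : 1 ≤ γ)
    (X : Type*) [MeasurableSpace X] (μ : Measure X)
    (hμfin : μ univ < ⊤)
    (ρ : X → ℝ) (hρm : Measurable ρ) (hρ0 : ∀ x, 0 ≤ ρ x)
    (c : ℝ) (hc : 0 ≤ c)
    (u : X → EuclideanSpace ℝ (Fin 3)) (hum : Measurable u)
    (h1 : Integrable (fun x => ρ x * ‖u x‖ ^ 2) μ)
    (h2 : Integrable (fun x => ‖u x‖ ^ 2) μ)
    (h3 : Integrable (fun x => |ρ x ^ (γ/2) - c ^ (γ/2)| ^ 2) μ) :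
    (∫ x, |ρ x - c| * ‖u x‖ ∂μ)
      ≤ (μ univ).toReal ^ ((γ - 1) / (2 * γ))
          * (∫ x, |ρ x ^ (γ/2) - c ^ (γ/2)| ^ 2 ∂μ) ^ (1 / (2 * γ))
          * ((∫ x, ρ x * ‖u x‖ ^ 2 ∂μ) ^ ((1:ℝ)/2)
              + c ^ ((1:ℝ)/2) * (∫ x, ‖u x‖ ^ 2 ∂μ) ^ ((1:ℝ)/2)) := by
  have : IsFiniteMeasure μ := ⟨hμfin⟩
  set h : X → ℝ := fun x => |√(ρ x) - √c|
  have hm : AEStronglyMeasurable h μ := by fun_prop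
  have hpow (x : X) : |h x| ^ (2 * γ) ≤ |ρ x ^ (γ / 2) - c ^ (γ / 2)| ^ 2 := by
    rw [abs_abs, mul_comm, Real.rpow_mul (abs_nonneg _), Real.rpow_two]
    exact pow_le_pow_left₀ (by positivity) (Real.abs_sqrt_sub_sqrt_rpow_le (hρ0 x) hc hγ) 2
  have hint : Integrable (fun x => |h x| ^ (2 * γ)) μ :=
    h3.mono' (by fun_prop (disch := linarith)) (ae_of_all _ fun x => by
      rw [Real.norm_of_nonneg (by positivity)]
      exact hpow x)
  have hL2 : Integrable (fun x => h x ^ 2) μ := by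
    simpa [Real.norm_eq_abs, Real.rpow_two, sq_abs] using
      integrable_norm_rpow_of_le (p := 2) (q := 2 * γ) hm zero_le_two (by linarith) (by linarith)
        (by simpa using hint)
  have hρu : 0 ≤ ∫ x, ρ x * ‖u x‖ ^ 2 ∂μ := integral_nonneg fun x => by have := hρ0 x; positivity
  calc ∫ x, |ρ x - c| * ‖u x‖ ∂μ
      ≤ (∫ x, h x ^ 2 ∂μ) ^ (1 / 2 : ℝ)
          * ((∫ x, ρ x * ‖u x‖ ^ 2 ∂μ) ^ (1 / 2 : ℝ) + √c * (∫ x, ‖u x‖ ^ 2 ∂μ) ^ (1 / 2 : ℝ)) :=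
        integral_abs_sub_mul_le hρm hρ0 hc hum.norm.aestronglyMeasurable (fun x => norm_nonneg _)
          h1 h2 hL2
    _ ≤ μ.real univ ^ ((γ - 1) / (2 * γ)) * (∫ x, |h x| ^ (2 * γ) ∂μ) ^ (1 / (2 * γ))
          * ((∫ x, ρ x * ‖u x‖ ^ 2 ∂μ) ^ (1 / 2 : ℝ) + √c * (∫ x, ‖u x‖ ^ 2 ∂μ) ^ (1 / 2 : ℝ)) := by
        gcongr ?_ * _
        exact integral_sq_rpow_one_half_le hγ hm hint
    _ ≤ _ := by
        rw [Real.sqrt_eq_rpow]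
        gcongr _ * ?_ ^ _ * _
        exact integral_mono hint h3 hpow

/-- Weighted L¹ estimate via `γ/2`-powers: for `γ ≥ 1`, on a finite measure space,
for nonnegative measurable `ρ`, a constant `c ≥ 0` and `u : X → ℝ³`,
`∫ |ρ − c||u| ≤ μ(X)^{(γ−1)/(2γ)} (∫ |ρ^{γ/2} − c^{γ/2}|²)^{1/(2γ)}
  [(∫ ρ|u|²)^{1/2} + c^{1/2}(∫ |u|²)^{1/2}]`. -/
theorem weighted_L1_estimate (γ : ℝ) (hγ : 1 ≤ γ)
    (X : Type*) [MeasurableSpace X] (μ : Measure X)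
    (hμ0 : 0 < μ univ) (hμfin : μ univ < ⊤)
    (ρ : X → ℝ) (hρm : Measurable ρ) (hρ0 : ∀ x, 0 ≤ ρ x)
    (c : ℝ) (hc : 0 ≤ c)
    (u : X → EuclideanSpace ℝ (Fin 3)) (hum : Measurable u)
    (h1 : Integrable (fun x => ρ x * ‖u x‖ ^ 2) μ)
    (h2 : Integrable (fun x => ‖u x‖ ^ 2) μ)
    (h3 : Integrable (fun x => |ρ x ^ (γ/2) - c ^ (γ/2)| ^ 2) μ) :
    (∫ x, |ρ x - c| * ‖u x‖ ∂μ)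
      ≤ (μ univ).toReal ^ ((γ - 1) / (2 * γ))
          * (∫ x, |ρ x ^ (γ/2) - c ^ (γ/2)| ^ 2 ∂μ) ^ (1 / (2 * γ))
          * ((∫ x, ρ x * ‖u x‖ ^ 2 ∂μ) ^ ((1:ℝ)/2)
              + c ^ ((1:ℝ)/2) * (∫ x, ‖u x‖ ^ 2 ∂μ) ^ ((1:ℝ)/2)) :=
  weighted_L1_estimate_general γ hγ X μ hμfin ρ hρm hρ0 c hc u hum h1 h2 h3
end
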